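/- arXiv:2601.15464 — 10 statements merged into one kernel-verified Lean document; each statement's English description precedes it below -/
import Mathlib

section
/- Let K be a field and let m, n, d be positive integers with d ≤ min(m,n). If C is a K-linear subspace of the space of m×n matrices over K such that every nonzero matrix in C has rank at least d, then dim_K C ≤ max(m,n)·(min(m,n) − d + 1). -/
open Matrix

/-- Auxiliary: the Singleton bound in the case `d ≤ m`, with bound `n * (m - d + 1)`.
The proof: project matrices in the code onto their first `m - d + 1` rows. This
projection is injective on the code, since a nonzero matrix supported on the last
`d - 1` rows has rank at most `d - 1 < d`. -/
theorem singleton_like_bound_aux (K : Type*) [Field K] (m n d : ℕ)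
    (hd : 0 < d) (hdm : d ≤ m)
    (C : Submodule K (Matrix (Fin m) (Fin n) K))
    (hC : ∀ A ∈ C, A ≠ 0 → d ≤ A.rank) :
    Module.finrank K C ≤ n * (m - d + 1) := by
  set k := m - d + 1 with hk
  have hkm : k ≤ m := by omega
  -- the projection onto the first k rows
  let f : Matrix (Fin m) (Fin n) K →ₗ[K] Matrix (Fin k) (Fin n) K :=
    LinearMap.funLeft K (Fin n → K) (Fin.castLE hkm)
  -- key rank bound: if the first k rows vanish, rank ≤ d - 1
  have hinj : Function.Injective (f.comp C.subtype) := by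
    rw [← LinearMap.ker_eq_bot, LinearMap.ker_eq_bot']
    rintro ⟨A, hA⟩ hfA
    have hfA' : f A = 0 := hfA
    have hrows : ∀ i : Fin k, A (Fin.castLE hkm i) = 0 := fun i => congrFun hfA' i
    by_contra hne
    have hAne : A ≠ 0 := fun h => hne (Subtype.ext h)
    have hrank := hC A hA hAne
    -- range of mulVecLin is contained in the kernel of restriction to first k coords
    let g : (Fin m → K) →ₗ[K] (Fin k → K) := LinearMap.funLeft K K (Fin.castLE hkm)
    have hle : LinearMap.range A.mulVecLin ≤ LinearMap.ker g := by
      rintro w ⟨v, rfl⟩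
      have : ∀ i : Fin k, A.mulVec v (Fin.castLE hkm i) = 0 := by
        intro i
        simp [Matrix.mulVec, hrows i]
      funext i
      simpa [g, LinearMap.funLeft_apply, Function.comp] using this i
    have hgsurj : Function.Surjective g :=
      LinearMap.funLeft_surjective_of_injective K K _ (Fin.castLE_injective hkm)
    have hker : Module.finrank K (LinearMap.ker g) = d - 1 := by
      have h1 := LinearMap.finrank_range_add_finrank_ker g
      rw [LinearMap.range_eq_top.mpr hgsurj] at h1
      simp only [finrank_top, Module.finrank_pi, Fintype.card_fin] at h1
      omega
    have : A.rank ≤ d - 1 := by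
      rw [Matrix.rank]
      calc Module.finrank K (LinearMap.range A.mulVecLin)
          ≤ Module.finrank K (LinearMap.ker g) := Submodule.finrank_mono hle
        _ = d - 1 := hker
    omega
  have hbound := LinearMap.finrank_le_finrank_of_injective hinj
  calc Module.finrank K C ≤ Module.finrank K (Matrix (Fin k) (Fin n) K) := hbound
    _ = k * n := by simp [Module.finrank_matrix]
    _ = n * k := mul_comm _ _

/-- Singleton-like bound for rank-metric codes over an arbitrary field. -/
theorem singleton_like_bound (K : Type*) [Field K] (m n d : ℕ)
    (hm : 0 < m) (hn : 0 < n) (hd : 0 < d) (hdmn : d ≤ min m n)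
    (C : Submodule K (Matrix (Fin m) (Fin n) K))
    (hC : ∀ A ∈ C, A ≠ 0 → d ≤ A.rank) :
    Module.finrank K C ≤ max m n * (min m n - d + 1) := by
  rcases le_or_gt m n with h | h
  · rw [min_eq_left h, max_eq_right h]
    exact singleton_like_bound_aux K m n d hd (le_trans hdmn (min_le_left m n)) C hC
  · rw [min_eq_right h.le, max_eq_left h.le]
    -- transpose the code
    let e := Matrix.transposeLinearEquiv (Fin m) (Fin n) K K
    have hfr : Module.finrank K (C.map e.toLinearMap) = Module.finrank K C :=
      LinearEquiv.finrank_map_eq e C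
    rw [← hfr]
    apply singleton_like_bound_aux K n m d hd (le_trans hdmn (min_le_right m n))
    rintro B hB hBne
    rcases Submodule.mem_map.mp hB with ⟨A, hA, rfl⟩
    have heA : e.toLinearMap A = A.transpose := by
      simp [e, Matrix.transposeLinearEquiv_apply]
    have hAne : A ≠ 0 := by
      rintro rfl
      apply hBne
      rw [heA]
      simp
    rw [heA, Matrix.rank_transpose]
    exact hC A hA hAne
end

section
/- Let K be a field and let m, n, d be positive integers with d ≤ min(m,n). Suppose C is a K-linear subspace of the space of m×n matrices over K such that every nonzero matrix in C has rank at least d and dim_K C = max(m,n)·(min(m,n) − d + 1) (i.e., C is MRD with minimum rank distance d). Then the dual code C^⊥ = {X ∈ K^{m×n} : Tr(X·Yᵀ) = 0 for all Y ∈ C} has dim_K C^⊥ = mn − max(m,n)·(min(m,n) − d + 1), and every nonzero matrix in C^⊥ has rank at least min(m,n) − d + 2; that is, C^⊥ is again MRD. -/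
open Matrix

/-- The dual of a rank-metric code with respect to the trace-product
`(X, Y) ↦ Tr(X * Yᵀ)`. -/
def dualCode {K : Type*} [Field K] {m n : ℕ}
    (C : Submodule K (Matrix (Fin m) (Fin n) K)) :
    Submodule K (Matrix (Fin m) (Fin n) K) where
  carrier := {X | ∀ Y ∈ C, Matrix.trace (X * Yᵀ) = 0}
  add_mem' := by
    intro a b ha hb Y hY
    simp [Matrix.add_mul, ha Y hY, hb Y hY]
  zero_mem' := by
    intro Y hY
    simp
  smul_mem' := by
    intro c a ha Y hY
    simp [Matrix.smul_mul, ha Y hY]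

/-!
Since the trace product is nondegenerate, `dim C^⊥ = mn - dim C`. For the rank bound assume
`n ≤ m` (otherwise transpose) and suppose `0 ≠ X ∈ C^⊥` has rank at most `k = n - d + 1`.
Let `A` be the space of matrices whose rows lie in a `k`-dimensional `W` containing the rows
of `X`. Then `A^⊥` consists of matrices with rows in `W^⊥`, which have rank at most `d - 1`,
so `C ∩ A^⊥ = 0`. As `dim C = mk = dim A`, this forces `C + A^⊥` to be the whole space, hence
`C^⊥ ∩ A = 0`, contradicting `X ∈ C^⊥ ∩ A`.
-/

open Module Submodule
open LinearMap (BilinForm)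

theorem Submodule.exists_le_finrank_eq {K V : Type*} [Field K] [AddCommGroup V] [Module K V]
    [FiniteDimensional K V] (p : Submodule K V) {k : ℕ} (h₁ : finrank K p ≤ k)
    (h₂ : k ≤ finrank K V) : ∃ W : Submodule K V, p ≤ W ∧ finrank K W = k := by
  obtain ⟨j, rfl⟩ := Nat.exists_eq_add_of_le h₁
  induction j generalizing p with
  | zero => exact ⟨p, le_rfl, rfl⟩
  | succ j ih =>
    have hp : p ≠ ⊤ := by
      rintro rfl
      rw [finrank_top] at h₂
      omega
    obtain ⟨v, -, hv⟩ := SetLike.exists_of_lt (lt_top_iff_ne_top.2 hp)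
    obtain ⟨W, hpW, hW⟩ := ih (p ⊔ span K {v})
      (by rw [finrank_sup_span_singleton hv]; omega) (by rw [finrank_sup_span_singleton hv]; omega)
    exact ⟨W, le_sup_left.trans hpW, by rw [hW, finrank_sup_span_singleton hv]; ring⟩

namespace LinearMap.BilinForm

variable {K V : Type*} [Field K] [AddCommGroup V] [Module K V] [FiniteDimensional K V]
  {B : LinearMap.BilinForm K V}

theorem Nondegenerate.disjoint_orthogonal_of_disjoint_orthogonal (hB : B.Nondegenerate)
    (hB₀ : B.IsRefl) {C A : Submodule K V} (hdim : finrank K A ≤ finrank K C)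
    (hCA : Disjoint C (B.orthogonal A)) : Disjoint (B.orthogonal C) A := by
  have hsup : C ⊔ B.orthogonal A = ⊤ := by
    refine eq_top_of_disjoint _ _ ?_ hCA
    rw [finrank_orthogonal hB]
    have := A.finrank_le
    omega
  rw [Submodule.disjoint_def]
  intro X hXC hXA
  refine (orthogonal_top_eq_bot hB).le fun Y _ => ?_
  obtain ⟨c, hc, a, ha, rfl⟩ := mem_sup.1 (hsup.ge (mem_top (x := Y)))
  rw [map_add, LinearMap.add_apply, hXC c hc, hB₀ _ _ (ha X hXA), add_zero]

end LinearMap.BilinForm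

namespace Matrix

variable {K : Type*} [Field K] {m n : Type*}

theorem dotProductBilin_nondegenerate [Fintype n] :
    (dotProductBilin K K : BilinForm K (n → K)).Nondegenerate :=
  ⟨fun v hv => dotProduct_eq_zero v hv,
    fun w hw => dotProduct_eq_zero w fun v => by rw [dotProduct_comm]; exact hw v⟩

section TraceProduct

variable [Fintype m] [Fintype n]

def traceProduct : BilinForm K (Matrix m n K) :=
  LinearMap.mk₂ K (fun X Y => trace (X * Yᵀ))
    (fun X X' Y => by simp [Matrix.add_mul])
    (fun c X Y => by simp [Matrix.smul_mul])
    (fun X Y Y' => by simp [Matrix.mul_add])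
    (fun c X Y => by simp [Matrix.mul_smul])

theorem traceProduct_apply (X Y : Matrix m n K) : traceProduct X Y = trace (X * Yᵀ) := rfl

theorem traceProduct_apply_eq_sum_dotProduct (X Y : Matrix m n K) :
    traceProduct X Y = ∑ i, X i ⬝ᵥ Y i := rfl

theorem traceProduct_comm (X Y : Matrix m n K) : traceProduct X Y = traceProduct Y X := by
  rw [traceProduct_apply, traceProduct_apply, ← trace_transpose, transpose_mul,
    transpose_transpose]

theorem traceProduct_isRefl : (traceProduct : BilinForm K (Matrix m n K)).IsRefl :=
  fun X Y h => by rwa [traceProduct_comm]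

theorem traceProduct_nondegenerate :
    (traceProduct : BilinForm K (Matrix m n K)).Nondegenerate := by
  classical
  have hsep : ∀ X : Matrix m n K, (∀ Y, traceProduct X Y = 0) → X = 0 := fun X hX => by
    ext i j
    simpa [traceProduct_apply, transpose_single, trace_mul_single] using hX (single i j 1)
  exact ⟨hsep, fun Y hY => hsep Y fun X => by rw [traceProduct_comm]; exact hY X⟩

end TraceProduct

def rowsIn (m : Type*) (W : Submodule K (n → K)) : Submodule K (Matrix m n K) :=
  Submodule.pi Set.univ fun _ => W

theorem mem_rowsIn {W : Submodule K (n → K)} {X : Matrix m n K} :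
    X ∈ rowsIn m W ↔ ∀ i, X i ∈ W :=
  ⟨fun h i => h i trivial, fun h i _ => h i⟩

theorem finrank_rowsIn [Fintype m] [Fintype n] (W : Submodule K (n → K)) :
    finrank K (rowsIn m W) = Fintype.card m * finrank K W := by
  let e : rowsIn m W ≃ₗ[K] (m → W) :=
    { toFun X i := ⟨X.1 i, mem_rowsIn.1 X.2 i⟩
      invFun Y := ⟨fun i => Y i, mem_rowsIn.2 fun i => (Y i).2⟩
      map_add' _ _ := rfl
      map_smul' _ _ := rfl
      left_inv _ := rfl
      right_inv _ := rfl }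
  rw [e.finrank_eq, finrank_pi_fintype, Finset.sum_const, Finset.card_univ, smul_eq_mul]

theorem rank_le_finrank_of_mem_rowsIn [Fintype m] [Fintype n] {W : Submodule K (n → K)}
    {X : Matrix m n K} (hX : X ∈ rowsIn m W) : X.rank ≤ finrank K W := by
  rw [rank_eq_finrank_span_row]
  exact finrank_mono (span_le.2 (Set.range_subset_iff.2 (mem_rowsIn.1 hX)))

theorem orthogonal_rowsIn_le [Fintype m] [Fintype n] (W : Submodule K (n → K)) :
    traceProduct.orthogonal (rowsIn m W) ≤
      rowsIn m (BilinForm.orthogonal (dotProductBilin K K) W) := by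
  classical
  refine fun Y hY => mem_rowsIn.2 fun i w hw => ?_
  have hsingle : Pi.single i w ∈ rowsIn m W :=
    mem_rowsIn.2 fun i' => by rcases eq_or_ne i' i with rfl | h <;> simp [*]
  have h := (traceProduct_apply_eq_sum_dotProduct (Pi.single i w) Y).symm.trans (hY _ hsingle)
  rwa [Finset.sum_eq_single i (fun j _ hj => by simp [hj]) (by simp), Pi.single_eq_same] at h

end Matrix

theorem dualCode_eq_orthogonal {K : Type*} [Field K] {m n : ℕ}
    (C : Submodule K (Matrix (Fin m) (Fin n) K)) : dualCode C = traceProduct.orthogonal C := by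
  ext X
  exact forall₂_congr fun Y _ => by rw [← traceProduct_apply, traceProduct_comm]

theorem finrank_dualCode {K : Type*} [Field K] {m n : ℕ}
    (C : Submodule K (Matrix (Fin m) (Fin n) K)) :
    finrank K (dualCode C) = m * n - finrank K C := by
  rw [dualCode_eq_orthogonal, BilinForm.finrank_orthogonal traceProduct_nondegenerate,
    finrank_matrix, Fintype.card_fin, Fintype.card_fin, finrank_self, mul_one]

theorem le_rank_of_mem_dualCode {K : Type*} [Field K] {m n d : ℕ} (hd : 0 < d) (hdn : d ≤ n)
    {C : Submodule K (Matrix (Fin m) (Fin n) K)} (hC : ∀ A ∈ C, A ≠ 0 → d ≤ A.rank)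
    (hdim : m * (n - d + 1) ≤ finrank K C) {X : Matrix (Fin m) (Fin n) K}
    (hX : X ∈ dualCode C) (hX0 : X ≠ 0) : n - d + 2 ≤ X.rank := by
  by_contra! hXrank
  obtain ⟨W, hXW, hW⟩ := (span K (Set.range X.row)).exists_le_finrank_eq (k := n - d + 1)
    (by rw [← rank_eq_finrank_span_row]; omega) (by rw [finrank_fin_fun]; omega)
  have hXA : X ∈ rowsIn (Fin m) W := mem_rowsIn.2 fun i => hXW (subset_span ⟨i, rfl⟩)
  have hCA : Disjoint C (traceProduct.orthogonal (rowsIn (Fin m) W)) := by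
    refine Submodule.disjoint_def.2 fun c hc hcA => ?_
    by_contra hc0
    have hrank := rank_le_finrank_of_mem_rowsIn (orthogonal_rowsIn_le W hcA)
    rw [BilinForm.finrank_orthogonal dotProductBilin_nondegenerate, hW, finrank_fin_fun] at hrank
    have := hC c hc hc0
    omega
  have hdisj := traceProduct_nondegenerate.disjoint_orthogonal_of_disjoint_orthogonal
    traceProduct_isRefl (by rwa [finrank_rowsIn, hW, Fintype.card_fin]) hCA
  rw [← dualCode_eq_orthogonal] at hdisj
  exact hX0 (Submodule.disjoint_def.1 hdisj X hX hXA)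

theorem le_rank_of_mem_dualCode' {K : Type*} [Field K] {m n d : ℕ} (hd : 0 < d) (hdm : d ≤ m)
    {C : Submodule K (Matrix (Fin m) (Fin n) K)} (hC : ∀ A ∈ C, A ≠ 0 → d ≤ A.rank)
    (hdim : n * (m - d + 1) ≤ finrank K C) {X : Matrix (Fin m) (Fin n) K}
    (hX : X ∈ dualCode C) (hX0 : X ≠ 0) : m - d + 2 ≤ X.rank := by
  let τ := transposeLinearEquiv (Fin m) (Fin n) K K
  have hCτ : ∀ A ∈ C.map τ.toLinearMap, A ≠ 0 → d ≤ A.rank := by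
    rintro _ ⟨A, hA, rfl⟩ hA0
    show d ≤ Aᵀ.rank
    rw [rank_transpose]
    exact hC A hA fun h => hA0 (by simp [τ, h])
  have hXτ : Xᵀ ∈ dualCode (C.map τ.toLinearMap) := by
    rintro _ ⟨Y, hY, rfl⟩
    exact (trace_transpose_mul X Yᵀ).trans (hX Y hY)
  rw [← rank_transpose]
  exact le_rank_of_mem_dualCode hd hdm hCτ (by rwa [LinearEquiv.finrank_map_eq])
    hXτ (mt transpose_eq_zero.1 hX0)

theorem dual_of_MRD_is_MRD_general (K : Type*) [Field K] (m n d : ℕ)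
    (hd : 0 < d) (hdmn : d ≤ min m n)
    (C : Submodule K (Matrix (Fin m) (Fin n) K))
    (hC : ∀ A ∈ C, A ≠ 0 → d ≤ A.rank)
    (hdim : Module.finrank K C = max m n * (min m n - d + 1)) :
    Module.finrank K (dualCode C) = m * n - max m n * (min m n - d + 1) ∧
      ∀ X ∈ dualCode C, X ≠ 0 → min m n - d + 2 ≤ X.rank := by
  refine ⟨by rw [finrank_dualCode, hdim], fun X hX hX0 => ?_⟩
  rcases le_total n m with h | h
  · rw [min_eq_right h, max_eq_left h] at hdim
    rw [min_eq_right h] at hdmn ⊢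
    exact le_rank_of_mem_dualCode hd hdmn hC hdim.ge hX hX0
  · rw [min_eq_left h, max_eq_right h] at hdim
    rw [min_eq_left h] at hdmn ⊢
    exact le_rank_of_mem_dualCode' hd hdmn hC hdim.ge hX hX0

/-- the dual of an MRD code is MRD. -/
theorem dual_of_MRD_is_MRD (K : Type*) [Field K] (m n d : ℕ)
    (hm : 0 < m) (hn : 0 < n) (hd : 0 < d) (hdmn : d ≤ min m n)
    (C : Submodule K (Matrix (Fin m) (Fin n) K))
    (hC : ∀ A ∈ C, A ≠ 0 → d ≤ A.rank)
    (hdim : Module.finrank K C = max m n * (min m n - d + 1)) :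
    Module.finrank K (dualCode C) = m * n - max m n * (min m n - d + 1) ∧
      ∀ X ∈ dualCode C, X ≠ 0 → min m n - d + 2 ≤ X.rank :=
  dual_of_MRD_is_MRD_general K m n d hd hdmn C hC hdim
end

section
/- Let K be a field and let m, n, d be positive integers with n ≤ m and m − n < d ≤ m. Let C be a K-linear subspace of the space of m×m matrices over K with dim_K C = m·(m − d + 1) and such that every nonzero matrix in C has rank at least d. For any injective map f : {1,...,n} → {1,...,m} (selecting n of the m columns), the punctured code C' = { the m×n matrix whose columns are the columns of A indexed by f : A ∈ C } is a K-linear subspace of K^{m×n} with dim_K C' = m·(m − d + 1), and every nonzero matrix in C' has rank at least d − (m − n); in particular C' is MRD. -/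
open Matrix

/-- The `K`-linear "puncturing" map keeping only the columns selected by `f`. -/
def puncturingMap (K : Type*) [Field K] (m n : ℕ) (f : Fin n → Fin m) :
    Matrix (Fin m) (Fin m) K →ₗ[K] Matrix (Fin m) (Fin n) K where
  toFun A := A.submatrix id f
  map_add' := by intro A B; ext i j; simp [Matrix.submatrix]
  map_smul' := by intro c A; ext i j; simp [Matrix.submatrix]

/-!
Deleting `m - n` columns of a matrix lowers its rank by at most `m - n`. Since every nonzero
codeword of `C` has rank `d > m - n`, no nonzero codeword is punctured to `0`, so puncturing is
injective on `C` and keeps its dimension, while ranks drop by at most `m - n`.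
-/

open Module Submodule

theorem Submodule.finrank_map_eq_of_disjoint_ker {K V W : Type*} [Field K]
    [AddCommGroup V] [Module K V] [AddCommGroup W] [Module K W]
    {p : Submodule K V} {g : V →ₗ[K] W} (h : Disjoint p (LinearMap.ker g)) :
    finrank K (p.map g) = finrank K p := by
  rw [← LinearMap.range_domRestrict]
  exact LinearMap.finrank_range_of_inj (LinearMap.injective_domRestrict_iff.mpr h)

namespace Matrix

variable {K l m ι : Type*} [Field K] [Fintype l] [Fintype m] [Fintype ι]

theorem rank_le_rank_submatrix_id_add (A : Matrix l m K) {f : ι → m}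
    (hf : Function.Injective f) :
    A.rank ≤ (A.submatrix id f).rank + (Fintype.card m - Fintype.card ι) := by
  classical
  rw [rank_eq_finrank_span_cols, rank_eq_finrank_span_cols]
  set S : Set m := Set.range f
  have hcols : span K (Set.range A.col) ≤
      span K (Set.range (A.submatrix id f).col) ⊔ span K (A.col '' Sᶜ) := by
    rw [← span_union]
    refine span_mono ?_
    rintro _ ⟨j, rfl⟩
    by_cases hj : j ∈ S
    · obtain ⟨i, rfl⟩ := hj
      exact Or.inl ⟨i, rfl⟩
    · exact Or.inr ⟨j, hj, rfl⟩
  have hdeleted : finrank K (span K (A.col '' Sᶜ)) ≤ Fintype.card m - Fintype.card ι := by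
    rw [Set.image_eq_range]
    refine (finrank_range_le_card _).trans_eq ?_
    rw [Fintype.card_compl_set, Set.card_range_of_injective hf]
  calc finrank K (span K (Set.range A.col))
      ≤ finrank K ↥(span K (Set.range (A.submatrix id f).col) ⊔ span K (A.col '' Sᶜ)) :=
        finrank_mono hcols
    _ ≤ _ := finrank_add_le_finrank_add_finrank _ _
    _ ≤ _ := Nat.add_le_add_left hdeleted _

end Matrix

theorem rank_le_rank_puncturingMap_add {K : Type*} [Field K] {m n : ℕ} {f : Fin n → Fin m}
    (hf : Function.Injective f) (A : Matrix (Fin m) (Fin m) K) :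
    A.rank ≤ (puncturingMap K m n f A).rank + (m - n) := by
  have h := A.rank_le_rank_submatrix_id_add hf
  rwa [Fintype.card_fin, Fintype.card_fin] at h

theorem puncturing_MRD_general (K : Type*) [Field K] (m n d : ℕ)
    (hmnd : m - n < d)
    (C : Submodule K (Matrix (Fin m) (Fin m) K))
    (hdim : Module.finrank K C = m * (m - d + 1))
    (hC : ∀ A ∈ C, A ≠ 0 → d ≤ A.rank)
    (f : Fin n → Fin m) (hf : Function.Injective f) :
    Module.finrank K (C.map (puncturingMap K m n f)) = m * (m - d + 1) ∧
      ∀ B ∈ C.map (puncturingMap K m n f), B ≠ 0 → d - (m - n) ≤ B.rank := by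
  have hrank := rank_le_rank_puncturingMap_add (K := K) hf
  have hdisj : Disjoint C (LinearMap.ker (puncturingMap K m n f)) := by
    refine LinearMap.disjoint_ker.mpr fun A hA hA0 => ?_
    by_contra hne
    have := hC A hA hne
    have := hrank A
    rw [hA0, rank_zero] at this
    omega
  refine ⟨by rw [finrank_map_eq_of_disjoint_ker hdisj, hdim], ?_⟩
  rintro _ ⟨A, hA, rfl⟩ hB
  have hA0 : A ≠ 0 := by
    rintro rfl
    exact hB (map_zero _)
  have := hC A hA hA0
  have := hrank A
  omega

/-- puncturing a square MRD code yields an MRD code. -/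
theorem puncturing_MRD (K : Type*) [Field K] (m n d : ℕ)
    (hn : 0 < n) (hnm : n ≤ m) (hmnd : m - n < d) (hdm : d ≤ m)
    (C : Submodule K (Matrix (Fin m) (Fin m) K))
    (hdim : Module.finrank K C = m * (m - d + 1))
    (hC : ∀ A ∈ C, A ≠ 0 → d ≤ A.rank)
    (f : Fin n → Fin m) (hf : Function.Injective f) :
    Module.finrank K (C.map (puncturingMap K m n f)) = m * (m - d + 1) ∧
      ∀ B ∈ C.map (puncturingMap K m n f), B ≠ 0 → d - (m - n) ≤ B.rank :=
  puncturing_MRD_general K m n d hmnd C hdim hC f hf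
end

section
/- Let L/K be a finite Galois extension of degree m whose Galois group is cyclic with generator σ. Let t be an integer with 0 ≤ t ≤ m − 1 and let a_0, a_1, ..., a_t ∈ L with a_t ≠ 0. Then the kernel of the K-linear endomorphism of L defined by β ↦ Σ_{i=0}^{t} a_i · σ^i(β) has K-dimension at most t. -/
/-- The `K`-linear endomorphism of `L` given by `β ↦ ∑_{i=0}^{t} a_i * σ^i(β)`. -/
noncomputable def sigmaPoly {K L : Type*} [Field K] [Field L] [Algebra K L]
    (σ : L ≃ₐ[K] L) (t : ℕ) (a : ℕ → L) : L →ₗ[K] L where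
  toFun β := ∑ i ∈ Finset.range (t + 1), a i * (σ ^ i) β
  map_add' := by
    intro x y
    simp [map_add, mul_add, Finset.sum_add_distrib]
  map_smul' := by
    intro c x
    simp [map_smul, mul_smul_comm, Finset.smul_sum]

/-!
Write `D = σ - 1`. If `β ≠ 0` lies in the kernel of `f = ∑ aᵢ σⁱ`, then `x ↦ f (β x)` kills `1`,
so its coefficients sum to zero and, by summation by parts, it factors as `g ∘ D` with `g` of
`σ`-degree one less. Hence `dim ker f ≤ dim ker g + dim ker D`, and by induction
`dim ker f ≤ t · dim ker D`. Finally `ker D` is the fixed field of `σ`, which is `K` because `σ`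
generates the Galois group.
-/

open Finset Module LinearMap

namespace LinearMap

variable {K V W U : Type*} [DivisionRing K] [AddCommGroup V] [Module K V] [AddCommGroup W]
  [Module K W] [AddCommGroup U] [Module K U]

theorem finrank_ker_comp_le [FiniteDimensional K V] [FiniteDimensional K W]
    (f : W →ₗ[K] U) (g : V →ₗ[K] W) :
    finrank K (ker (f ∘ₗ g)) ≤ finrank K (ker f) + finrank K (ker g) := by
  set N := ker (f ∘ₗ g)
  have hrange : finrank K (range (g.domRestrict N)) ≤ finrank K (ker f) := by
    rw [range_domRestrict]
    exact Submodule.finrank_mono (Submodule.map_le_iff_le_comap.mpr (ker_comp g f).le)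
  have hker : finrank K (ker (g.domRestrict N)) ≤ finrank K (ker g) := by
    rw [ker_domRestrict, (Submodule.equivMapOfInjective _ N.injective_subtype _).finrank_eq,
      Submodule.map_comap_subtype]
    exact Submodule.finrank_mono inf_le_right
  have := (g.domRestrict N).finrank_range_add_finrank_ker
  omega

theorem finrank_ker_le_finrank_ker_comp [FiniteDimensional K V] (f : W →ₗ[K] U)
    {g : V →ₗ[K] W} (hg : Function.Surjective g) :
    finrank K (ker f) ≤ finrank K (ker (f ∘ₗ g)) := by
  rw [ker_comp]
  conv_lhs => rw [← Submodule.map_comap_eq_of_surjective hg (ker f)]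
  exact Submodule.finrank_map_le g _

end LinearMap

namespace sigmaPoly

variable {K L : Type*} [Field K] [Field L] [Algebra K L] (σ : L ≃ₐ[K] L)

theorem apply (t : ℕ) (a : ℕ → L) (x : L) :
    sigmaPoly σ t a x = ∑ i ∈ range (t + 1), a i * (σ ^ i) x := rfl

theorem comp_mulLeft (t : ℕ) (a : ℕ → L) (β : L) :
    sigmaPoly σ t a ∘ₗ mulLeft K β = sigmaPoly σ t (fun i ↦ a i * (σ ^ i) β) := by
  ext x
  simp only [comp_apply, apply, mulLeft_apply, map_mul, mul_assoc]

theorem succ_eq_comp_sub_id (t : ℕ) (b : ℕ → L) (hb : ∑ i ∈ range (t + 2), b i = 0) :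
    sigmaPoly σ (t + 1) b =
      sigmaPoly σ t (fun j ↦ -∑ i ∈ range (j + 1), b i) ∘ₗ (σ.toLinearMap - LinearMap.id) := by
  ext x
  have hparts := sum_range_by_parts (fun i ↦ (σ ^ i) x) b (t + 1 + 1)
  rw [show ∑ i ∈ range (t + 1 + 1), b i = 0 from hb, smul_zero, zero_sub, Nat.add_sub_cancel,
    ← sum_neg_distrib] at hparts
  simp only [comp_apply, apply, LinearMap.sub_apply, AlgEquiv.toLinearMap_apply, id_apply,
    mul_comm (b _)]
  simp only [smul_eq_mul] at hparts
  rw [hparts]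
  refine sum_congr rfl fun j _ ↦ ?_
  rw [map_sub, pow_succ, AlgEquiv.mul_apply]
  ring

theorem finrank_ker_le_mul [FiniteDimensional K L] (t : ℕ) (a : ℕ → L) (ha : a t ≠ 0) :
    finrank K (ker (sigmaPoly σ t a)) ≤ t * finrank K (ker (σ.toLinearMap - LinearMap.id)) := by
  induction t generalizing a with
  | zero =>
    have hbot : ker (sigmaPoly σ 0 a) = ⊥ := by
      refine ker_eq_bot'.mpr fun x hx ↦ ?_
      simpa [apply, ha] using hx
    simp [hbot]
  | succ t ih =>
    by_cases hbot : ker (sigmaPoly σ (t + 1) a) = ⊥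
    · rw [hbot, finrank_bot]
      exact Nat.zero_le _
    obtain ⟨β, hβ, hβ0⟩ := Submodule.exists_mem_ne_zero_of_ne_bot hbot
    set b : ℕ → L := fun i ↦ a i * (σ ^ i) β
    have hb : ∑ i ∈ range (t + 2), b i = 0 := hβ
    set c : ℕ → L := fun j ↦ -∑ i ∈ range (j + 1), b i
    have hc : c t ≠ 0 := by
      have hct : c t = b (t + 1) := by
        rw [sum_range_succ, add_eq_zero_iff_neg_eq] at hb
        exact hb
      rw [hct]
      exact mul_ne_zero ha ((map_ne_zero _).mpr hβ0)
    calc finrank K (ker (sigmaPoly σ (t + 1) a))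
        ≤ finrank K (ker (sigmaPoly σ (t + 1) b)) := by
          rw [← comp_mulLeft]
          exact finrank_ker_le_finrank_ker_comp _ (mulLeft_bijective₀ β hβ0).surjective
      _ ≤ finrank K (ker (sigmaPoly σ t c)) + finrank K (ker (σ.toLinearMap - LinearMap.id)) := by
          rw [succ_eq_comp_sub_id σ t b hb]
          exact finrank_ker_comp_le _ _
      _ ≤ (t + 1) * finrank K (ker (σ.toLinearMap - LinearMap.id)) := by
          rw [add_one_mul]
          exact Nat.add_le_add_right (ih c hc) _

end sigmaPoly

theorem AlgEquiv.ker_sub_id_eq_range_algebraMap {K L : Type*} [Field K] [Field L] [Algebra K L]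
    [FiniteDimensional K L] [IsGalois K L] (σ : L ≃ₐ[K] L)
    (hσ : ∀ g : L ≃ₐ[K] L, g ∈ Subgroup.zpowers σ) :
    ker (σ.toLinearMap - LinearMap.id) = range (Algebra.linearMap K L) := by
  ext x
  simp only [mem_ker, LinearMap.sub_apply, sub_eq_zero, AlgEquiv.toLinearMap_apply, id_apply,
    LinearMap.mem_range, Algebra.linearMap_apply]
  rw [← Set.mem_range, IsGalois.mem_range_algebraMap_iff_fixed]
  refine ⟨fun hx g ↦ ?_, fun hx ↦ hx σ⟩
  exact Subgroup.zpowers_le (H := MulAction.stabilizer _ x) |>.mpr hx (hσ g)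

theorem sigmaDegree_bound_general (K L : Type*) [Field K] [Field L] [Algebra K L]
    [FiniteDimensional K L] [IsGalois K L]
    (σ : L ≃ₐ[K] L) (hσ : ∀ g : L ≃ₐ[K] L, g ∈ Subgroup.zpowers σ)
    (t : ℕ) (a : ℕ → L) (hat : a t ≠ 0) :
    Module.finrank K (LinearMap.ker (sigmaPoly σ t a)) ≤ t := by
  have hfixed : finrank K (ker (σ.toLinearMap - LinearMap.id)) = 1 := by
    rw [σ.ker_sub_id_eq_range_algebraMap hσ,
      finrank_range_of_inj (algebraMap K L).injective, finrank_self]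
  simpa [hfixed] using sigmaPoly.finrank_ker_le_mul σ t a hat

/-- for a cyclic Galois extension `L/K` of degree `m` with Galois
group generated by `σ`, the kernel of `β ↦ ∑_{i=0}^{t} a_i σ^i(β)` (with
`a_t ≠ 0` and `t ≤ m - 1`) has `K`-dimension at most `t`. -/
theorem sigmaDegree_bound (K L : Type*) [Field K] [Field L] [Algebra K L]
    [FiniteDimensional K L] [IsGalois K L] (m : ℕ) (hm : Module.finrank K L = m)
    (σ : L ≃ₐ[K] L) (hσ : ∀ g : L ≃ₐ[K] L, g ∈ Subgroup.zpowers σ)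
    (t : ℕ) (ht : t ≤ m - 1) (a : ℕ → L) (hat : a t ≠ 0) :
    Module.finrank K (LinearMap.ker (sigmaPoly σ t a)) ≤ t :=
  sigmaDegree_bound_general K L σ hσ t a hat
end

section
/- Let d, n, m be positive integers with d ≤ n ≤ m, and let K be a field with at least n − 1 elements (in particular, any infinite field). Then there exists a K-linear subspace C of the space of m×n matrices over K with dim_K C = (m − d + 1)·(n − d + 1) whose minimum rank distance is exactly d, i.e., every nonzero matrix in C has rank at least d and some matrix in C has rank exactly d. -/
set_option maxHeartbeats 1000000
set_option linter.unnecessarySeqFocus false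

section AuxiliaryRankCode

variable {K : Type*} [Field K]


/-- Total accessor for the parameter matrix. -/
def bget (m n d : ℕ) (B : Matrix (Fin (m - d + 1)) (Fin (n - d + 1)) K) (k l : ℕ) : K :=
  if h : k < m - d + 1 ∧ l < n - d + 1 then B ⟨k, h.1⟩ ⟨l, h.2⟩ else 0

lemma bget_eq (m n d : ℕ) (B : Matrix (Fin (m - d + 1)) (Fin (n - d + 1)) K)
    (k : Fin (m - d + 1)) (l : Fin (n - d + 1)) : bget m n d B (k : ℕ) (l : ℕ) = B k l := by
  rw [bget, dif_pos ⟨k.isLt, l.isLt⟩]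

/-- Entry `(i,j)` of the code matrix built from parameter matrix `B`.
On each diagonal `j - i = t` of the band `-(m-d) ≤ t ≤ n-d`, the entries are an
extended Reed–Solomon encoding of the corresponding diagonal of `B`. -/
def phiEnt (m n d : ℕ) (a : ℕ → K) (B : Matrix (Fin (m - d + 1)) (Fin (n - d + 1)) K)
    (i : Fin m) (j : Fin n) : K :=
  ∑ k ∈ Finset.range (m - d + 1), ∑ l ∈ Finset.range (n - d + 1),
    (if k + (j : ℕ) = l + (i : ℕ) then
      (if (i : ℕ) = m - 1 ∨ (j : ℕ) = n - 1 then
        (if k = m - d ∨ l = n - d then bget m n d B k l else 0)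
       else a (min (i : ℕ) (j : ℕ)) ^ (min k l) * bget m n d B k l)
     else 0)

lemma core {m n d : ℕ} (hd : 0 < d) (hdn : d ≤ n) (hnm : n ≤ m)
    (a : ℕ → K) (ha : ∀ r r', r < n - 1 → r' < n - 1 → a r = a r' → r = r')
    (B : Matrix (Fin (m - d + 1)) (Fin (n - d + 1)) K) (hB : B ≠ 0) :
    ∃ t : ℤ,
      (∀ (i : Fin m) (j : Fin n), t < (j : ℤ) - (i : ℤ) → phiEnt m n d a B i j = 0) ∧
      ∃ s : Finset (Fin m × Fin n), d ≤ s.card ∧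
        ∀ q ∈ s, ((q.2 : ℤ) - (q.1 : ℤ) = t) ∧ phiEnt m n d a B q.1 q.2 ≠ 0 := by
  classical
  have hm0 : 0 < m := by omega
  have hn0 : 0 < n := by omega
  -- the support of B and the top diagonal t
  have hex : ∃ q : Fin (m - d + 1) × Fin (n - d + 1), B q.1 q.2 ≠ 0 := by
    by_contra h
    push_neg at h
    exact hB (by ext k l; simpa using h (k, l))
  set supp := Finset.univ.filter
      (fun q : Fin (m - d + 1) × Fin (n - d + 1) => B q.1 q.2 ≠ 0) with hsuppdef
  have hsupp : supp.Nonempty := by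
    obtain ⟨q, hq⟩ := hex
    exact ⟨q, Finset.mem_filter.mpr ⟨Finset.mem_univ _, hq⟩⟩
  obtain ⟨q0, hq0supp, hq0max⟩ :=
    Finset.exists_max_image supp (fun q => (q.2 : ℤ) - (q.1 : ℤ)) hsupp
  set t : ℤ := (q0.2 : ℤ) - (q0.1 : ℤ) with htdef
  have hq0 : B q0.1 q0.2 ≠ 0 := (Finset.mem_filter.mp hq0supp).2
  have hmaxF : ∀ (k : Fin (m - d + 1)) (l : Fin (n - d + 1)),
      B k l ≠ 0 → (l : ℤ) - (k : ℤ) ≤ t :=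
    fun k l h => hq0max (k, l) (Finset.mem_filter.mpr ⟨Finset.mem_univ _, h⟩)
  -- ℕ-level versions
  have hk0lt : (q0.1 : ℕ) < m - d + 1 := q0.1.isLt
  have hl0lt : (q0.2 : ℕ) < n - d + 1 := q0.2.isLt
  have hq0' : bget m n d B (q0.1 : ℕ) (q0.2 : ℕ) ≠ 0 := by
    rw [bget_eq]; exact hq0
  have hmax : ∀ k l : ℕ, bget m n d B k l ≠ 0 → (l : ℤ) - (k : ℤ) ≤ t := by
    intro k l h
    by_cases hkl : k < m - d + 1 ∧ l < n - d + 1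
    · rw [bget, dif_pos hkl] at h
      exact hmaxF ⟨k, hkl.1⟩ ⟨l, hkl.2⟩ h
    · rw [bget, dif_neg hkl] at h
      exact absurd rfl h
  have hq0t : ((q0.2 : ℕ) : ℤ) - ((q0.1 : ℕ) : ℤ) = t := rfl
  clear_value t
  clear htdef hsuppdef hq0supp hq0max hmaxF hq0
  -- bounds on t
  have ht1 : -((m : ℤ) - d) ≤ t := by omega
  have ht2 : t ≤ (n : ℤ) - d := by omega
  -- the diagonal's parameter range
  set klo : ℕ := (-t).toNat with hklodef
  set khi : ℕ := (min ((m : ℤ) - d) ((n : ℤ) - d - t)).toNat with hkhidef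
  have hklo : (klo : ℤ) = max 0 (-t) := by omega
  have hkhi : (khi : ℤ) = min ((m : ℤ) - d) ((n : ℤ) - d - t) := by omega
  clear_value klo khi
  clear hklodef hkhidef
  have hklokhi : klo ≤ khi := by omega
  set D : ℕ := khi - klo with hDdef
  set ihi : ℕ := khi + d - 1 with hihidef
  have hihim : ihi ≤ m - 1 := by omega
  have hihin : (ihi : ℤ) + t ≤ (n : ℤ) - 1 := by omega
  have hlast : ihi = m - 1 ∨ (ihi : ℤ) + t = (n : ℤ) - 1 := by omega
  -- the polynomial carried by diagonal t
  set p : Polynomial K := ∑ k ∈ Finset.range (m - d + 1),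
    (if 0 ≤ (k : ℤ) + t ∧ (k : ℤ) + t ≤ (n : ℤ) - d then
      Polynomial.C (bget m n d B k ((k : ℤ) + t).toNat) * Polynomial.X ^ (k - klo)
    else 0) with hpdef
  -- coefficient formula
  have hcoeff : ∀ k : ℕ, k < m - d + 1 → 0 ≤ (k : ℤ) + t → (k : ℤ) + t ≤ (n : ℤ) - d →
      p.coeff (k - klo) = bget m n d B k ((k : ℤ) + t).toNat := by
    intro k hklt h1 h2
    rw [hpdef, Polynomial.finset_sum_coeff]
    rw [Finset.sum_eq_single k]
    · rw [if_pos ⟨h1, h2⟩, Polynomial.coeff_C_mul, Polynomial.coeff_X_pow, if_pos rfl, mul_one]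
    · intro k' hk' hk'ne
      have hk'lt := Finset.mem_range.mp hk'
      by_cases h' : 0 ≤ (k' : ℤ) + t ∧ (k' : ℤ) + t ≤ (n : ℤ) - d
      · rw [if_pos h', Polynomial.coeff_C_mul, Polynomial.coeff_X_pow]
        have hne : ¬ ((k : ℕ) - klo = k' - klo) := by omega
        rw [if_neg hne, mul_zero]
      · rw [if_neg h', Polynomial.coeff_zero]
    · intro h
      exact absurd (Finset.mem_range.mpr hklt) h
  -- degree bound
  have hdeg : p.natDegree ≤ D := by
    rw [hpdef]
    apply Polynomial.natDegree_sum_le_of_forall_le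
    intro k hk
    have hklt := Finset.mem_range.mp hk
    by_cases h' : 0 ≤ (k : ℤ) + t ∧ (k : ℤ) + t ≤ (n : ℤ) - d
    · rw [if_pos h']
      refine le_trans (Polynomial.natDegree_C_mul_X_pow_le _ _) ?_
      omega
    · rw [if_neg h']
      simp
  -- p is nonzero
  have hpne : p ≠ 0 := by
    intro h0
    have hc := hcoeff (q0.1 : ℕ) hk0lt (by omega) (by omega)
    rw [h0, Polynomial.coeff_zero] at hc
    have hfix : (((q0.1 : ℕ) : ℤ) + t).toNat = (q0.2 : ℕ) := by omega
    rw [hfix] at hc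
    exact hq0' hc.symm
  -- vanishing above the top diagonal
  have hz : ∀ (i : Fin m) (j : Fin n), t < (j : ℤ) - (i : ℤ) → phiEnt m n d a B i j = 0 := by
    intro i j hij
    rw [phiEnt]
    apply Finset.sum_eq_zero
    intro k _
    apply Finset.sum_eq_zero
    intro l _
    by_cases hc : k + (j : ℕ) = l + (i : ℕ)
    · have hBkl : bget m n d B k l = 0 := by
        by_contra hne
        have := hmax k l hne
        omega
      rw [if_pos hc, hBkl]
      simp
    · rw [if_neg hc]
  -- evaluation formula on non-last cells of the diagonal
  have hEval : ∀ (i : Fin m) (j : Fin n), (j : ℤ) - (i : ℤ) = t →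
      klo ≤ (i : ℕ) → (i : ℕ) < ihi →
      phiEnt m n d a B i j = p.eval (a ((i : ℕ) - klo)) := by
    intro i j hij hilo hihi'
    have hi := i.isLt
    have hj := j.isLt
    have hnotlast : ¬ ((i : ℕ) = m - 1 ∨ (j : ℕ) = n - 1) := by omega
    rw [hpdef, Polynomial.eval_finset_sum, phiEnt]
    refine Finset.sum_congr rfl fun k hk => ?_
    have hklt := Finset.mem_range.mp hk
    by_cases h' : 0 ≤ (k : ℤ) + t ∧ (k : ℤ) + t ≤ (n : ℤ) - d
    · rw [if_pos h', Polynomial.eval_mul, Polynomial.eval_C, Polynomial.eval_pow,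
        Polynomial.eval_X]
      rw [Finset.sum_eq_single (((k : ℤ) + t).toNat)]
      · rw [if_pos (by omega), if_neg hnotlast]
        have h1 : min (i : ℕ) (j : ℕ) = (i : ℕ) - klo := by omega
        have h2 : min k (((k : ℤ) + t).toNat) = k - klo := by omega
        rw [h1, h2, mul_comm]
      · intro l _ hlne
        rw [if_neg (by omega)]
      · intro hnotmem
        exact absurd (Finset.mem_range.mpr (by omega)) hnotmem
    · rw [if_neg h', Polynomial.eval_zero]
      apply Finset.sum_eq_zero
      intro l hl
      have hllt := Finset.mem_range.mp hl
      rcases not_and_or.mp h' with h'' | h'' <;> rw [if_neg (by omega)]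
  -- the last cell of the diagonal carries the top coefficient
  have hLast : ∀ (i : Fin m) (j : Fin n), (j : ℤ) - (i : ℤ) = t → (i : ℕ) = ihi →
      phiEnt m n d a B i j = bget m n d B khi (((khi : ℤ) + t).toNat) := by
    intro i j hij hii
    have hi := i.isLt
    have hj := j.isLt
    have hislast : (i : ℕ) = m - 1 ∨ (j : ℕ) = n - 1 := by omega
    rw [phiEnt]
    rw [Finset.sum_eq_single khi]
    · rw [Finset.sum_eq_single (((khi : ℤ) + t).toNat)]
      · rw [if_pos (by omega), if_pos hislast, if_pos (by omega)]
      · intro l _ hlne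
        rw [if_neg (by omega)]
      · intro hnotmem
        exact absurd (Finset.mem_range.mpr (by omega)) hnotmem
    · intro k hk hkne
      have hklt := Finset.mem_range.mp hk
      apply Finset.sum_eq_zero
      intro l hl
      have hllt := Finset.mem_range.mp hl
      by_cases hc : k + (j : ℕ) = l + (i : ℕ)
      · rw [if_pos hc, if_pos hislast, if_neg (by omega)]
      · rw [if_neg hc]
    · intro hnotmem
      exact absurd (Finset.mem_range.mpr (by omega)) hnotmem
  -- counting the nonvanishing cells
  set E : ℕ := ihi - klo with hEdef
  set Z := (Finset.range E).filter (fun r => p.eval (a r) = 0) with hZdef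
  have hZcard : Z.card ≤ p.natDegree := by
    have hsub : Z.image a ⊆ p.roots.toFinset := by
      intro x hx
      obtain ⟨r, hr, hrx⟩ := Finset.mem_image.mp hx
      have hroot := (Finset.mem_filter.mp hr).2
      rw [Multiset.mem_toFinset, Polynomial.mem_roots hpne]
      rw [← hrx]
      exact hroot
    have hinj : Set.InjOn a (Z : Set ℕ) := by
      intro r hr r' hr' hrr
      have h1 := Finset.mem_range.mp (Finset.mem_filter.mp hr).1
      have h2 := Finset.mem_range.mp (Finset.mem_filter.mp hr').1
      exact ha r r' (by omega) (by omega) hrr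
    calc Z.card = (Z.image a).card := (Finset.card_image_of_injOn hinj).symm
      _ ≤ p.roots.toFinset.card := Finset.card_le_card hsub
      _ ≤ Multiset.card p.roots := p.roots.toFinset_card_le
      _ ≤ p.natDegree := Polynomial.card_roots' p
  set NZ := (Finset.range E).filter (fun r => p.eval (a r) ≠ 0) with hNZdef
  have hNZcard : Z.card + NZ.card = E := by
    rw [hZdef, hNZdef]
    rw [Finset.card_filter_add_card_filter_not, Finset.card_range]
  -- build the cells
  let rowOf : ℕ → Fin m := fun x => ⟨min x (m - 1), by omega⟩
  let colOf : ℤ → Fin n := fun z => ⟨min z.toNat (n - 1), by omega⟩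
  have hrowval : ∀ x : ℕ, x ≤ m - 1 → ((rowOf x : Fin m) : ℕ) = x := by
    intro x hx
    simp only [rowOf]
    omega
  have hcolval : ∀ z : ℤ, 0 ≤ z → z ≤ (n : ℤ) - 1 → ((colOf z : Fin n) : ℕ) = z.toNat := by
    intro z h1 h2
    simp only [colOf]
    omega
  let cellOf : ℕ → Fin m × Fin n := fun r => (rowOf (klo + r), colOf ((klo + r : ℤ) + t))
  have hcellrow : ∀ r, r < E → ((cellOf r).1 : ℕ) = klo + r := by
    intro r hr
    exact hrowval _ (by omega)
  have hcellcol : ∀ r, r < E → (((cellOf r).2 : Fin n) : ℕ) = ((klo + r : ℤ) + t).toNat := by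
    intro r hr
    exact hcolval _ (by omega) (by omega)
  have hcelldiag : ∀ r, r < E → (((cellOf r).2 : ℤ) - ((cellOf r).1 : ℤ) = t) := by
    intro r hr
    have h1 := hcellrow r hr
    have h2 := hcellcol r hr
    omega
  have hcellval : ∀ r, r < E → phiEnt m n d a B (cellOf r).1 (cellOf r).2
      = p.eval (a r) := by
    intro r hr
    have h1 := hcellrow r hr
    have h2 := hcelldiag r hr
    rw [hEval _ _ h2 (by omega) (by omega), h1]
    congr 1
    congr 1
    omega
  set s0 := NZ.image cellOf with hs0def
  have hs0card : s0.card = NZ.card := by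
    rw [hs0def]
    apply Finset.card_image_of_injOn
    intro r hr r' hr' hrr
    have h1 := Finset.mem_range.mp (Finset.mem_filter.mp hr).1
    have h2 := Finset.mem_range.mp (Finset.mem_filter.mp hr').1
    have e1 := hcellrow r h1
    have e2 := hcellrow r' h2
    rw [hrr] at e1
    omega
  have hs0prop : ∀ q ∈ s0, ((q.2 : ℤ) - (q.1 : ℤ) = t) ∧ phiEnt m n d a B q.1 q.2 ≠ 0 := by
    intro q hq
    obtain ⟨r, hr, hrq⟩ := Finset.mem_image.mp hq
    have hrmem := Finset.mem_filter.mp hr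
    have h1 := Finset.mem_range.mp hrmem.1
    subst hrq
    exact ⟨hcelldiag r h1, by rw [hcellval r h1]; exact hrmem.2⟩
  refine ⟨t, hz, ?_⟩
  by_cases htc : p.coeff D ≠ 0
  · -- include the last cell of the diagonal
    let lastcell : Fin m × Fin n := (rowOf ihi, colOf ((ihi : ℤ) + t))
    have hlrow : ((lastcell.1 : Fin m) : ℕ) = ihi := hrowval _ (by omega)
    have hlcol : ((lastcell.2 : Fin n) : ℕ) = ((ihi : ℤ) + t).toNat :=
      hcolval _ (by omega) (by omega)
    have hldiag : ((lastcell.2 : ℤ) - (lastcell.1 : ℤ) = t) := by omega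
    have hlval : phiEnt m n d a B lastcell.1 lastcell.2 ≠ 0 := by
      rw [hLast _ _ hldiag hlrow]
      have := hcoeff khi (by omega) (by omega) (by omega)
      rw [hDdef] at htc
      rw [← this]
      exact htc
    have hnotmem : lastcell ∉ s0 := by
      intro hmem
      obtain ⟨r, hr, hrq⟩ := Finset.mem_image.mp hmem
      have h1 := Finset.mem_range.mp (Finset.mem_filter.mp hr).1
      have := hcellrow r h1
      rw [hrq] at this
      omega
    refine ⟨insert lastcell s0, ?_, ?_⟩
    · rw [Finset.card_insert_of_notMem hnotmem, hs0card]
      omega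
    · intro q hq
      rcases Finset.mem_insert.mp hq with hq | hq
      · subst hq
        exact ⟨hldiag, hlval⟩
      · exact hs0prop q hq
  · -- the top coefficient vanishes, so the degree is smaller
    push_neg at htc
    have hdeglt : p.natDegree < D := by
      rcases lt_or_eq_of_le hdeg with h | h
      · exact h
      · exfalso
        have hl := Polynomial.leadingCoeff_ne_zero.mpr hpne
        rw [Polynomial.leadingCoeff, h] at hl
        exact hl htc
    refine ⟨s0, ?_, hs0prop⟩
    rw [hs0card]
    omega

open Finset in
lemma rank_ge_of_triangular {K : Type*} [Field K] {m n d : ℕ}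
    (A : Matrix (Fin m) (Fin n) K) (t : ℤ)
    (hz : ∀ (i : Fin m) (j : Fin n), t < (j : ℤ) - (i : ℤ) → A i j = 0)
    (s : Finset (Fin m × Fin n)) (hcard : d ≤ s.card)
    (hdiag : ∀ p ∈ s, ((p.2 : ℤ) - (p.1 : ℤ) = t) ∧ A p.1 p.2 ≠ 0) :
    d ≤ A.rank := by
  obtain ⟨s', hs'sub, hs'card⟩ := Finset.exists_subset_card_eq hcard
  have hdiag' : ∀ p ∈ s', ((p.2 : ℤ) - (p.1 : ℤ) = t) ∧ A p.1 p.2 ≠ 0 :=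
    fun p hp => hdiag p (hs'sub hp)
  have hinj : Set.InjOn Prod.fst (s' : Set (Fin m × Fin n)) := by
    intro p hp q hq hpq
    have h1 := (hdiag' p hp).1
    have h2 := (hdiag' q hq).1
    have : p.2 = q.2 := by
      have : ((p.2 : ℤ)) = (q.2 : ℤ) := by rw [hpq] at h1; omega
      exact Fin.ext (by exact_mod_cast this)
    exact Prod.ext hpq this
  have hrows : (s'.image Prod.fst).card = d := by
    rw [Finset.card_image_of_injOn hinj, hs'card]
  set rows := s'.image Prod.fst with hrowsdef
  let e : Fin d ↪o Fin m := rows.orderEmbOfFin hrows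
  have hmem : ∀ r : Fin d, ∃ p, p ∈ s' ∧ p.1 = e r := by
    intro r
    obtain ⟨p, hp, hfst⟩ := Finset.mem_image.mp (Finset.orderEmbOfFin_mem rows hrows r)
    exact ⟨p, hp, hfst⟩
  choose pfun hpmem hpfst using hmem
  let c : Fin d → Fin n := fun r => (pfun r).2
  have hc1 : ∀ r, ((c r : ℤ)) - (e r : ℤ) = t := by
    intro r
    have := (hdiag' _ (hpmem r)).1
    rw [hpfst r] at this
    exact this
  have hc2 : ∀ r, A (e r) (c r) ≠ 0 := by
    intro r
    have := (hdiag' _ (hpmem r)).2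
    rwa [hpfst r] at this
  set M := A.submatrix e c with hM
  have htri : ∀ r u : Fin d, r < u → M r u = 0 := by
    intro r u hru
    apply hz
    have := hc1 u
    have hmono : (e r : ℕ) < (e u : ℕ) := e.strictMono hru
    omega
  have hdet : M.det ≠ 0 := by
    rw [Matrix.det_of_lowerTriangular M (by
      intro i j hij
      exact htri i j (by simpa using hij))]
    exact Finset.prod_ne_zero_iff.mpr fun r _ => hc2 r
  have hrankM : M.rank = d := by
    rw [Matrix.rank_of_isUnit M ((Matrix.isUnit_iff_isUnit_det M).mpr (isUnit_iff_ne_zero.mpr hdet))]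
    simp
  -- M = (P * A) * Q
  let P : Matrix (Fin d) (Fin m) K := Matrix.of fun r i => if e r = i then 1 else 0
  let Q : Matrix (Fin n) (Fin d) K := Matrix.of fun j u => if c u = j then 1 else 0
  have hfact : M = (P * A) * Q := by
    ext r u
    simp only [hM, Matrix.submatrix_apply, Matrix.mul_apply, P, Q, Matrix.of_apply,
      ite_mul, one_mul, zero_mul, mul_ite, mul_one, mul_zero]
    simp [Finset.sum_ite_eq, Finset.sum_ite_eq']
  calc d = M.rank := hrankM.symm
    _ ≤ A.rank := by
        rw [hfact]
        exact le_trans (Matrix.rank_mul_le_left _ _) (Matrix.rank_mul_le_right _ _)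


end AuxiliaryRankCode

section
variable {K : Type*} [Field K]

/-- The encoding as a linear map. -/
def Phi (m n d : ℕ) (a : ℕ → K) :
    Matrix (Fin (m - d + 1)) (Fin (n - d + 1)) K →ₗ[K] Matrix (Fin m) (Fin n) K where
  toFun B := Matrix.of (phiEnt m n d a B)
  map_add' B C := by
    ext i j
    show phiEnt m n d a (B + C) i j = phiEnt m n d a B i j + phiEnt m n d a C i j
    rw [phiEnt, phiEnt, phiEnt, ← Finset.sum_add_distrib]
    refine Finset.sum_congr rfl fun k _ => ?_
    rw [← Finset.sum_add_distrib]
    refine Finset.sum_congr rfl fun l _ => ?_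
    have hb : bget m n d (B + C) k l = bget m n d B k l + bget m n d C k l := by
      rw [bget, bget, bget]
      split_ifs with h
      · simp [Matrix.add_apply]
      · simp
    split_ifs <;> simp [hb] <;> ring
  map_smul' c B := by
    ext i j
    show phiEnt m n d a (c • B) i j = c * phiEnt m n d a B i j
    rw [phiEnt, phiEnt, Finset.mul_sum]
    refine Finset.sum_congr rfl fun k _ => ?_
    rw [Finset.mul_sum]
    refine Finset.sum_congr rfl fun l _ => ?_
    have hb : bget m n d (c • B) k l = c * bget m n d B k l := by
      rw [bget, bget]
      split_ifs with h
      · simp [Matrix.smul_apply, smul_eq_mul]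
      · simp
    split_ifs <;> simp [hb] <;> ring

end

/-- over any field with at least `n - 1` elements there exists an
`[m×n, (m-d+1)(n-d+1)]_K` rank-metric code of minimum rank distance exactly `d`. -/
theorem existence_code_MDS_construction (K : Type*) [Field K]
    (m n d : ℕ) (hd : 0 < d) (hdn : d ≤ n) (hnm : n ≤ m)
    (hK : ((n - 1 : ℕ) : Cardinal) ≤ Cardinal.mk K) :
    ∃ C : Submodule K (Matrix (Fin m) (Fin n) K),
      Module.finrank K C = (m - d + 1) * (n - d + 1) ∧
        (∀ A ∈ C, A ≠ 0 → d ≤ A.rank) ∧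
        (∃ A ∈ C, A.rank = d) := by
  classical
  have hm0 : 0 < m := by omega
  have hn0 : 0 < n := by omega
  -- choose n - 1 distinct evaluation points
  obtain ⟨f⟩ : Nonempty (Fin (n - 1) ↪ K) := by
    apply Cardinal.lift_mk_le'.mp
    rw [Cardinal.mk_fin, Cardinal.lift_natCast, Cardinal.lift_uzero]
    exact hK
  let a : ℕ → K := fun r => if h : r < n - 1 then f ⟨r, h⟩ else 0
  have ha : ∀ r r', r < n - 1 → r' < n - 1 → a r = a r' → r = r' := by
    intro r r' h1 h2 he
    simp only [a, dif_pos h1, dif_pos h2] at he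
    have := f.injective he
    exact congrArg Fin.val (by exact_mod_cast this)
  set Φ := Phi (K := K) m n d a with hΦdef
  have hΦapp : ∀ B i j, Φ B i j = phiEnt m n d a B i j := fun B i j => rfl
  have hinjΦ : Function.Injective Φ := by
    intro B C hBC
    by_contra hne
    have hBCne : B - C ≠ 0 := fun h => hne (sub_eq_zero.mp h)
    obtain ⟨t, hz, s, hcard, hprop⟩ := core hd hdn hnm a ha (B - C) hBCne
    obtain ⟨q, hq⟩ := Finset.card_pos.mp (lt_of_lt_of_le hd hcard)
    have h0 : Φ (B - C) = 0 := by rw [map_sub, hBC, sub_self]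
    have := (hprop q hq).2
    rw [← hΦapp, h0] at this
    exact this rfl
  have hmin : ∀ A ∈ LinearMap.range Φ, A ≠ 0 → d ≤ A.rank := by
    rintro A ⟨B, rfl⟩ hAne
    have hBne : B ≠ 0 := fun h => hAne (by rw [h, map_zero])
    obtain ⟨t, hz, s, hcard, hprop⟩ := core hd hdn hnm a ha B hBne
    exact rank_ge_of_triangular (Φ B) t hz s hcard hprop
  refine ⟨LinearMap.range Φ, ?_, hmin, ?_⟩
  · rw [LinearMap.finrank_range_of_inj hinjΦ, Module.finrank_matrix]
    simp
  · -- the element of rank exactly d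
    set B0 : Matrix (Fin (m - d + 1)) (Fin (n - d + 1)) K :=
      Matrix.of (fun k l => if (k : ℕ) = 0 ∧ (l : ℕ) = n - d then 1 else 0) with hB0def
    have hb1 : bget m n d B0 0 (n - d) = 1 := by
      rw [bget, dif_pos ⟨by omega, by omega⟩]
      simp [hB0def]
    have hbz : ∀ k l : ℕ, ¬(k = 0 ∧ l = n - d) → bget m n d B0 k l = 0 := by
      intro k l h
      rw [bget]
      split_ifs with h'
      · simp only [hB0def, Matrix.of_apply]
        rw [if_neg h]
      · rfl
    have hA0 : ∀ (i : Fin m) (j : Fin n),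
        phiEnt m n d a B0 i j = (if (j : ℕ) = (n - d) + (i : ℕ) then 1 else 0) := by
      intro i j
      have hi := i.isLt
      have hj := j.isLt
      rw [phiEnt]
      rw [Finset.sum_eq_single 0]
      · rw [Finset.sum_eq_single (n - d)]
        · by_cases hij : (j : ℕ) = (n - d) + (i : ℕ)
          · rw [if_pos (by omega : 0 + (j : ℕ) = n - d + (i : ℕ)), hb1,
              if_pos (Or.inr rfl : (0 : ℕ) = m - d ∨ n - d = n - d),
              show min 0 (n - d) = 0 by omega, pow_zero, one_mul, ite_self, if_pos hij]
          · rw [if_neg (by omega), if_neg hij]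
        · intro l _ hlne
          by_cases hc : 0 + (j : ℕ) = l + (i : ℕ)
          · rw [if_pos hc, hbz 0 l (by omega)]
            simp
          · rw [if_neg hc]
        · intro h
          exact absurd (Finset.mem_range.mpr (by omega)) h
      · intro k _ hkne
        apply Finset.sum_eq_zero
        intro l _
        by_cases hc : k + (j : ℕ) = l + (i : ℕ)
        · rw [if_pos hc, hbz k l (by omega)]
          simp
        · rw [if_neg hc]
      · intro h
        exact absurd (Finset.mem_range.mpr (by omega)) h
    refine ⟨Φ B0, LinearMap.mem_range_self _ _, ?_⟩
    have hA0ne : Φ B0 ≠ 0 := by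
      intro h
      have h1 : Φ B0 ⟨0, hm0⟩ ⟨n - d, by omega⟩ = 0 := by rw [h]; rfl
      rw [hΦapp, hA0] at h1
      rw [if_pos (by simp)] at h1
      exact one_ne_zero h1
    have hge : d ≤ (Φ B0).rank := hmin _ (LinearMap.mem_range_self _ _) hA0ne
    have hle : (Φ B0).rank ≤ d := by
      -- factor through a d-row matrix
      set P : Matrix (Fin m) (Fin d) K :=
        Matrix.of (fun i r => if (i : ℕ) = (r : ℕ) then 1 else 0) with hPdef
      set Q : Matrix (Fin d) (Fin n) K :=
        Matrix.of (fun r j => if (j : ℕ) = (n - d) + (r : ℕ) then 1 else 0) with hQdef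
      have hPQ : Φ B0 = P * Q := by
        ext i j
        rw [hΦapp, hA0, Matrix.mul_apply]
        by_cases hij : (j : ℕ) = (n - d) + (i : ℕ)
        · have hid : (i : ℕ) < d := by omega
          rw [if_pos hij]
          rw [Finset.sum_eq_single ⟨(i : ℕ), hid⟩]
          · simp [hPdef, hQdef, hij]
          · intro r _ hrne
            simp only [hPdef, hQdef, Matrix.of_apply]
            rw [if_neg (fun hh => hrne (Fin.ext hh.symm)), zero_mul]
          · intro h
            exact absurd (Finset.mem_univ _) h
        · rw [if_neg hij]
          refine (Finset.sum_eq_zero fun r _ => ?_).symm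
          simp only [hPdef, hQdef, Matrix.of_apply]
          by_cases h1 : (i : ℕ) = (r : ℕ)
          · rw [if_pos h1, one_mul, if_neg (by omega)]
          · rw [if_neg h1, zero_mul]
      rw [hPQ]
      refine le_trans (Matrix.rank_mul_le_right P Q) ?_
      refine le_trans (Matrix.rank_le_card_height Q) ?_
      simp
    exact le_antisymm hle hge
end

section
/- Let n and k be positive integers and let C be an ℝ-linear subspace of the space of n×n real matrices of dimension k in which every nonzero matrix is invertible. Then the set of 2n×2n block matrices M(A,λ) = [[λ·I_n, Aᵀ],[A, −λ·I_n]], ranging over A ∈ C and λ ∈ ℝ, is an ℝ-linear subspace of the space of 2n×2n real matrices of dimension k + 1, every element of which is a symmetric matrix and every nonzero element of which is invertible. -/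
/-!
The map `(A, λ) ↦ M(A, λ)` is linear and injective, so its image of `C × ℝ` has dimension `k + 1`,
and `M(A, λ)` is visibly symmetric. Invertibility comes from squaring:
`M(A, λ)² = diag(AᵀA + λ²I, AAᵀ + λ²I)`, whose blocks are positive definite when `λ ≠ 0` and are
products of invertible matrices when `λ = 0` (then `A ≠ 0`, so `A` is invertible).
-/

open Matrix

namespace Matrix

variable {m R : Type*} [DecidableEq m]

section CommRing

variable [CommRing R]

def symmBlock (A : Matrix m m R) (l : R) : Matrix (m ⊕ m) (m ⊕ m) R :=
  fromBlocks (l • 1) Aᵀ A (-(l • 1))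

def symmBlockₗ : Matrix m m R × R →ₗ[R] Matrix (m ⊕ m) (m ⊕ m) R where
  toFun p := symmBlock p.1 p.2
  map_add' p q := by
    simp only [symmBlock, Prod.fst_add, Prod.snd_add, transpose_add, fromBlocks_add, add_smul,
      neg_add]
  map_smul' c p := by
    simp only [symmBlock, Prod.smul_fst, Prod.smul_snd, transpose_smul, fromBlocks_smul,
      smul_smul, smul_neg, smul_eq_mul, RingHom.id_apply]

theorem isSymm_symmBlock (A : Matrix m m R) (l : R) : (symmBlock A l).IsSymm :=
  IsSymm.fromBlocks (by simp [IsSymm]) rfl (by simp [IsSymm])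

theorem symmBlock_eq_zero_iff [Nonempty m] {A : Matrix m m R} {l : R} :
    symmBlock A l = 0 ↔ A = 0 ∧ l = 0 := by
  constructor
  · intro h
    rw [symmBlock, ← fromBlocks_zero, fromBlocks_inj] at h
    obtain ⟨i⟩ := ‹Nonempty m›
    exact ⟨h.2.2.1, by simpa using congrFun₂ h.1 i i⟩
  · rintro ⟨rfl, rfl⟩
    simp [symmBlock]

theorem symmBlockₗ_injective [Nonempty m] : Function.Injective (symmBlockₗ (m := m) (R := R)) := by
  rw [← LinearMap.ker_eq_bot, LinearMap.ker_eq_bot']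
  rintro ⟨A, l⟩ h
  obtain ⟨rfl, rfl⟩ := symmBlock_eq_zero_iff.mp h
  rfl

theorem symmBlock_mul_self [Fintype m] (A : Matrix m m R) (l : R) :
    symmBlock A l * symmBlock A l =
      fromBlocks (Aᵀ * A + (l * l) • 1) 0 0 (A * Aᵀ + (l * l) • 1) := by
  simp [symmBlock, fromBlocks_multiply, smul_smul, add_comm]

end CommRing

theorem isUnit_transpose_mul_self_add_smul_one [Fintype m] {A : Matrix m m ℝ} {l : ℝ}
    (h : IsUnit A ∨ l ≠ 0) : IsUnit (Aᵀ * A + (l * l) • 1) := by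
  rcases eq_or_ne l 0 with rfl | hl
  · have hA : IsUnit A := h.resolve_right (· rfl)
    simpa using ((isUnit_transpose A).mpr hA).mul hA
  · refine PosDef.isUnit (PosDef.posSemidef_add ?_ (PosDef.one.smul (mul_self_pos.mpr hl)))
    simpa using posSemidef_conjTranspose_mul_self A

theorem isUnit_symmBlock [Fintype m] {A : Matrix m m ℝ} {l : ℝ} (h : IsUnit A ∨ l ≠ 0) :
    IsUnit (symmBlock A l) := by
  refine isUnit_of_mul_isUnit_left (y := symmBlock A l) ?_
  rw [symmBlock_mul_self, isUnit_fromBlocks_zero₂₁]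
  refine ⟨isUnit_transpose_mul_self_add_smul_one h, ?_⟩
  simpa using isUnit_transpose_mul_self_add_smul_one (A := Aᵀ) (by rwa [isUnit_transpose])

end Matrix

theorem symmetric_block_construction_general (n k : ℕ) (hn : 0 < n)
    (C : Submodule ℝ (Matrix (Fin n) (Fin n) ℝ))
    (hdim : Module.finrank ℝ C = k)
    (hC : ∀ A ∈ C, A ≠ 0 → IsUnit A) :
    ∃ D : Submodule ℝ (Matrix (Fin n ⊕ Fin n) (Fin n ⊕ Fin n) ℝ),
      (D : Set (Matrix (Fin n ⊕ Fin n) (Fin n ⊕ Fin n) ℝ)) =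
        {M | ∃ A ∈ C, ∃ l : ℝ,
          M = Matrix.fromBlocks (l • (1 : Matrix (Fin n) (Fin n) ℝ)) Aᵀ
                A (-(l • (1 : Matrix (Fin n) (Fin n) ℝ)))} ∧
      Module.finrank ℝ D = k + 1 ∧
      (∀ M ∈ D, M.IsSymm) ∧
      (∀ M ∈ D, M ≠ 0 → IsUnit M) := by
  have : Nonempty (Fin n) := ⟨⟨0, hn⟩⟩
  let f := symmBlockₗ ∘ₗ C.subtype.prodMap (LinearMap.id : ℝ →ₗ[ℝ] ℝ)
  have hf : Function.Injective f :=
    symmBlockₗ_injective.comp (Prod.map_injective.mpr ⟨C.injective_subtype, Function.injective_id⟩)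
  refine ⟨LinearMap.range f, ?_, ?_, ?_, ?_⟩
  · ext M
    simp [f, symmBlockₗ, symmBlock, eq_comm]
  · rw [LinearMap.finrank_range_of_inj hf, Module.finrank_prod, hdim, Module.finrank_self]
  · rintro _ ⟨p, rfl⟩
    exact isSymm_symmBlock _ _
  · rintro _ ⟨⟨⟨A, hA⟩, l⟩, rfl⟩ hne
    refine isUnit_symmBlock (or_iff_not_imp_right.mpr fun hl => hC A hA ?_)
    rintro rfl
    exact hne (symmBlock_eq_zero_iff.mpr ⟨rfl, not_not.mp hl⟩)

/-- from a `k`-dimensional space `C` of `n×n` real matrices in which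
every nonzero element is invertible, the set of block matrices
`M(A,λ) = [[λI, Aᵀ],[A, -λI]]` with `A ∈ C`, `λ ∈ ℝ`, is a `(k+1)`-dimensional
subspace of `2n×2n` real matrices consisting of symmetric matrices, in which
every nonzero element is invertible. -/
theorem symmetric_block_construction (n k : ℕ) (hn : 0 < n) (hk : 0 < k)
    (C : Submodule ℝ (Matrix (Fin n) (Fin n) ℝ))
    (hdim : Module.finrank ℝ C = k)
    (hC : ∀ A ∈ C, A ≠ 0 → IsUnit A) :
    ∃ D : Submodule ℝ (Matrix (Fin n ⊕ Fin n) (Fin n ⊕ Fin n) ℝ),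
      (D : Set (Matrix (Fin n ⊕ Fin n) (Fin n ⊕ Fin n) ℝ)) =
        {M | ∃ A ∈ C, ∃ l : ℝ,
          M = Matrix.fromBlocks (l • (1 : Matrix (Fin n) (Fin n) ℝ)) Aᵀ
                A (-(l • (1 : Matrix (Fin n) (Fin n) ℝ)))} ∧
      Module.finrank ℝ D = k + 1 ∧
      (∀ M ∈ D, M.IsSymm) ∧
      (∀ M ∈ D, M ≠ 0 → IsUnit M) :=
  symmetric_block_construction_general n k hn C hdim hC
end

section
/- Let L/K be a field extension, let h, r, k, n be positive integers with h < k, and let U be an [n,k]_{L/K} system (a K-subspace of L^k with dim_K U = n whose L-linear span is L^k). If U is (h,r)-evasive, i.e., dim_K(U ∩ W) ≤ r for every L-subspace W of L^k with dim_L W = h, then U is (h−1, r−1)-evasive, i.e., dim_K(U ∩ W') ≤ r − 1 for every L-subspace W' of L^k with dim_L W' = h − 1. -/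
/-- an `(h,r)`-evasive `[n,k]_{L/K}` system is `(h-1, r-1)`-evasive. -/
theorem evasive_one_less (K L : Type*) [Field K] [Field L] [Algebra K L]
    (h r k n : ℕ) (hh : 0 < h) (hr : 0 < r) (hk : 0 < k) (hn : 0 < n) (hhk : h < k)
    (U : Submodule K (Fin k → L))
    (hUdim : Module.finrank K U = n)
    (hUspan : Submodule.span L (U : Set (Fin k → L)) = ⊤)
    (hev : ∀ W : Submodule L (Fin k → L), Module.finrank L W = h →
      Module.finrank K ↥(U ⊓ W.restrictScalars K) ≤ r) :
    ∀ W' : Submodule L (Fin k → L), Module.finrank L W' = h - 1 →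
      Module.finrank K ↥(U ⊓ W'.restrictScalars K) ≤ r - 1 := by
  intro W' hW'
  have hfinU : FiniteDimensional K U := by
    refine FiniteDimensional.of_finrank_pos ?_
    omega
  -- U is not contained in W'
  have hne : ¬ (U : Set (Fin k → L)) ⊆ (W' : Set (Fin k → L)) := by
    intro hsub
    have hle : Submodule.span L (U : Set (Fin k → L)) ≤ W' := Submodule.span_le.mpr hsub
    rw [hUspan] at hle
    have hWtop : W' = ⊤ := le_antisymm le_top hle
    have : Module.finrank L W' = k := by
      rw [hWtop, finrank_top, Module.finrank_fin_fun]
    omega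
  obtain ⟨u, huU, huW'⟩ := Set.not_subset.mp hne
  have hu0 : u ≠ 0 := by
    rintro rfl; exact huW' (Submodule.zero_mem _)
  set W : Submodule L (Fin k → L) := W' ⊔ Submodule.span L {u} with hWdef
  have hinf : W' ⊓ Submodule.span L {u} = ⊥ := by
    rw [eq_bot_iff]
    rintro x ⟨hx1, hx2⟩
    obtain ⟨c, rfl⟩ := Submodule.mem_span_singleton.mp hx2
    rcases eq_or_ne c 0 with rfl | hc
    · simp
    · exfalso
      apply huW'
      have : c⁻¹ • (c • u) ∈ W' := Submodule.smul_mem _ _ hx1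
      rwa [smul_smul, inv_mul_cancel₀ hc, one_smul] at this
  have hW : Module.finrank L W = h := by
    have := Submodule.finrank_sup_add_finrank_inf_eq W' (Submodule.span L {u})
    rw [hinf, hW', finrank_span_singleton hu0] at this
    simp only [finrank_bot, add_zero] at this
    rw [hWdef]
    omega
  have huW : u ∈ W := le_sup_right (α := Submodule L (Fin k → L))
    (Submodule.mem_span_singleton_self u)
  have hlt : U ⊓ W'.restrictScalars K < U ⊓ W.restrictScalars K := by
    refine lt_of_le_of_ne (inf_le_inf_left _ ?_) ?_
    · exact fun x hx => le_sup_left (α := Submodule L (Fin k → L)) hx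
    · intro heq
      have : u ∈ U ⊓ W'.restrictScalars K := heq ▸ ⟨huU, huW⟩
      exact huW' this.2
  have hfin2 : FiniteDimensional K ↥(U ⊓ W.restrictScalars K) :=
    Submodule.finiteDimensional_inf_left U _
  have h1 : Module.finrank K ↥(U ⊓ W'.restrictScalars K)
      < Module.finrank K ↥(U ⊓ W.restrictScalars K) :=
    Submodule.finrank_lt_finrank_of_lt hlt
  have h2 := hev W hW
  omega
end

section
/- Let L/K be a field extension of finite degree m, let h, k, n be positive integers with h < k < n, and let U be an [n,k]_{L/K} system (a K-subspace of L^k with dim_K U = n whose L-linear span is L^k) that is h-scattered, i.e., dim_K(U ∩ W) ≤ h for every L-subspace W of L^k with dim_L W = h. Then n·(h + 1) ≤ k·m. -/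
/-!
Fix `K`-independent `λ₀, …, λ_h ∈ L`. If `∑ λᵢ uᵢ = 0` with `uᵢ ∈ U`, then a `K`-basis of the
`K`-span of the `uᵢ` is `L`-independent (its `L`-span has dimension at most `h + 1`, and an
`h`-scattered spanning system meets every `L`-subspace of dimension `≤ h` in dimension `≤` that
dimension), so the products `λᵢ βⱼ` are `K`-independent and all `uᵢ` vanish. Hence
`(u₀, …, u_h) ↦ ∑ λᵢ uᵢ` embeds `U^(h+1)` into `L^k`, giving `n (h + 1) ≤ k m`; if `m ≤ h`, the
same argument with `m` coefficients gives `n ≤ k`, which is excluded.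
-/

open Module

namespace Submodule

variable {K L E : Type*} [Field K] [Field L] [Algebra K L]
  [AddCommGroup E] [Module K E] [Module L E] [IsScalarTower K L E]

variable (L) in
def IsScattered (U : Submodule K E) (h : ℕ) : Prop :=
  ∀ W : Submodule L E, finrank L W = h → finrank K ↥(U ⊓ W.restrictScalars K) ≤ h

theorem exists_mem_notMem_of_span_eq_top {U : Set E} (hspan : span L U = ⊤)
    {W : Submodule L E} (hW : W ≠ ⊤) : ∃ u ∈ U, u ∉ W := by
  by_contra! hUW
  exact hW (eq_top_iff.2 (hspan ▸ span_le.2 hUW))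

variable [FiniteDimensional K E] {U : Submodule K E} {h : ℕ}

/-- Adjoining to `W` a vector of `U` outside it raises `dim_L W` by one and `dim_K (U ∩ W)` by at
least one, so the bound at dimension `h` propagates down. -/
theorem IsScattered.finrank_inf_le (hU : IsScattered L U h)
    (hspan : span L (U : Set E) = ⊤) (hh : h < finrank L E)
    (W : Submodule L E) (hW : finrank L W ≤ h) :
    finrank K ↥(U ⊓ W.restrictScalars K) ≤ finrank L W := by
  have := Module.Finite.of_restrictScalars_finite K L E
  induction hd : h - finrank L W generalizing W with
  | zero =>
    have hWh : finrank L W = h := by omega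
    exact hWh ▸ hU W hWh
  | succ t ih =>
    have hWtop : W ≠ ⊤ := fun hWtop => by rw [hWtop, finrank_top] at hd; omega
    obtain ⟨u, huU, huW⟩ := exists_mem_notMem_of_span_eq_top hspan hWtop
    have hW' := finrank_sup_span_singleton huW
    have hlt : U ⊓ W.restrictScalars K < U ⊓ (W ⊔ span L {u}).restrictScalars K :=
      SetLike.lt_iff_le_and_exists.2 ⟨inf_le_inf_left U fun x hx => mem_sup_left hx, u,
        mem_inf.2 ⟨huU, mem_sup_right (mem_span_singleton_self u)⟩, fun hu => huW (mem_inf.1 hu).2⟩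
    have hgrow := finrank_lt_finrank_of_lt hlt
    have hbound := ih (W ⊔ span L {u}) (by omega) (by omega)
    omega

theorem IsScattered.linearIndependent (hU : IsScattered L U h)
    (hspan : span L (U : Set E) = ⊤) (hh : h < finrank L E)
    {ι : Type*} [Fintype ι] (hι : Fintype.card ι ≤ h + 1)
    {v : ι → E} (hvU : ∀ i, v i ∈ U) (hv : LinearIndependent K v) :
    LinearIndependent L v := by
  rw [linearIndependent_iff_card_eq_finrank_span]
  refine le_antisymm ?_ (finrank_range_le_card v)
  by_contra! hlt
  set W := span L (Set.range v)
  change finrank L W < _ at hlt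
  have hcard : Fintype.card ι ≤ finrank K ↥(U ⊓ W.restrictScalars K) := by
    rw [← finrank_span_eq_card hv]
    exact finrank_mono <| span_le.2 <|
      Set.range_subset_iff.2 fun i => ⟨hvU i, subset_span ⟨i, rfl⟩⟩
  have hsmall := hU.finrank_inf_le hspan hh W (by omega)
  omega

theorem IsScattered.eq_zero_of_sum_smul_eq_zero (hU : IsScattered L U h)
    (hspan : span L (U : Set E) = ⊤) (hh : h < finrank L E)
    {ι : Type*} [Fintype ι] (hι : Fintype.card ι ≤ h + 1)
    {c : ι → L} (hc : LinearIndependent K c)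
    {u : ι → E} (huU : ∀ i, u i ∈ U) (hsum : ∑ i, c i • u i = 0) : u = 0 := by
  let β := Module.finBasis K (span K (Set.range u))
  have hβK : LinearIndependent K fun j => (β j : E) :=
    β.linearIndependent.map' (span K (Set.range u)).subtype (ker_subtype _)
  have hβ : LinearIndependent L fun j => (β j : E) := by
    refine hU.linearIndependent hspan hh ?_ (fun j => ?_) hβK
    · exact (Fintype.card_fin _).trans_le ((finrank_range_le_card u).trans hι)
    · exact span_le.2 (Set.range_subset_iff.2 huU) (β j).2
  let a : ι → Fin _ → K := fun i => β.repr ⟨u i, subset_span ⟨i, rfl⟩⟩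
  have hu : ∀ i, u i = ∑ j, a i j • (β j : E) := fun i => by
    have hrepr := congrArg Subtype.val (β.sum_repr ⟨u i, subset_span ⟨i, rfl⟩⟩)
    simp only [coe_sum, coe_smul] at hrepr
    exact hrepr.symm
  have ha : a = 0 := by
    ext i j
    refine Fintype.linearIndependent_iff.mp (linearIndependent_smul hc hβ)
      (fun p => a p.1 p.2) ?_ (i, j)
    calc ∑ p : ι × _, a p.1 p.2 • c p.1 • (β p.2 : E)
      _ = ∑ i, c i • ∑ j, a i j • (β j : E) := by
        simp only [Fintype.sum_prod_type, Finset.smul_sum, smul_comm (a _ _) (c _)]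
      _ = 0 := by simpa only [← hu] using hsum
  funext i
  simp [hu i, ha]

theorem IsScattered.mul_finrank_le [FiniteDimensional K L] (hU : IsScattered L U h)
    (hspan : span L (U : Set E) = ⊤) (hh : h < finrank L E)
    {r : ℕ} (hrh : r ≤ h + 1) (hrK : r ≤ finrank K L) :
    r * finrank K U ≤ finrank K E := by
  have := Module.Finite.of_restrictScalars_finite K L E
  let c : Fin r → L := fun i => Module.finBasis K L (Fin.castLE hrK i)
  have hc : LinearIndependent K c :=
    (Module.finBasis K L).linearIndependent.comp _ (Fin.castLE_injective hrK)
  let Φ : (Fin r → U) →ₗ[K] E := ∑ i, c i • U.subtype ∘ₗ LinearMap.proj i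
  have hΦ : Function.Injective Φ := by
    refine (injective_iff_map_eq_zero Φ).2 fun v hv => funext fun i => Subtype.ext ?_
    have hv0 := hU.eq_zero_of_sum_smul_eq_zero hspan hh (by simpa using hrh) hc
      (fun i => (v i).2) (by simpa [Φ] using hv)
    exact congrFun hv0 i
  simpa [finrank_pi_fintype, mul_comm] using LinearMap.finrank_le_finrank_of_injective hΦ

end Submodule

theorem h_scattered_bound_general (K L : Type*) [Field K] [Field L] [Algebra K L]
    [FiniteDimensional K L] (m h k n : ℕ) (hm : Module.finrank K L = m)
    (hhk : h < k) (hkn : k < n)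
    (U : Submodule K (Fin k → L))
    (hUdim : Module.finrank K U = n)
    (hUspan : Submodule.span L (U : Set (Fin k → L)) = ⊤)
    (hsc : ∀ W : Submodule L (Fin k → L), Module.finrank L W = h →
      Module.finrank K ↥(U ⊓ W.restrictScalars K) ≤ h) :
    n * (h + 1) ≤ k * m := by
  have hsc : U.IsScattered L h := hsc
  have hk : h < finrank L (Fin k → L) := by simpa using hhk
  have hdim : finrank K (Fin k → L) = k * m := by simp [finrank_pi_fintype, hm]
  have bound (r : ℕ) (hrh : r ≤ h + 1) (hrm : r ≤ m) : r * n ≤ k * m :=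
    hdim ▸ hUdim ▸ hsc.mul_finrank_le hUspan hk hrh (hm ▸ hrm)
  rcases le_or_gt m h with hmh | hhm
  · have hm0 : 0 < m := hm ▸ finrank_pos
    nlinarith [bound m (by omega) le_rfl]
  · simpa [mul_comm] using bound (h + 1) le_rfl hhm

/-- bound for `h`-scattered systems: an `h`-scattered
`[n,k]_{L/K}` system with `k < n` satisfies `n(h+1) ≤ km`, where `m = [L:K]`. -/
theorem h_scattered_bound (K L : Type*) [Field K] [Field L] [Algebra K L]
    [FiniteDimensional K L] (m h k n : ℕ) (hm : Module.finrank K L = m)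
    (hh : 0 < h) (hhk : h < k) (hkn : k < n)
    (U : Submodule K (Fin k → L))
    (hUdim : Module.finrank K U = n)
    (hUspan : Submodule.span L (U : Set (Fin k → L)) = ⊤)
    (hsc : ∀ W : Submodule L (Fin k → L), Module.finrank L W = h →
      Module.finrank K ↥(U ⊓ W.restrictScalars K) ≤ h) :
    n * (h + 1) ≤ k * m :=
  h_scattered_bound_general K L m h k n hm hhk hkn U hUdim hUspan hsc
end

section
/- Let L/K be a finite Galois extension of degree m whose Galois group is cyclic with generator σ, and let k be a positive integer with k ≤ m. Then the set U = { (α, σ(α), σ²(α), ..., σ^{k−1}(α)) : α ∈ L } is a K-subspace of L^k with dim_K U = m whose L-linear span is all of L^k, and U is (k−1)-scattered: dim_K(U ∩ W) ≤ k − 1 for every L-subspace W of L^k with dim_L W = k − 1. That is, U is a (k−1)-scattered [m,k]_{L/K} system. -/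
/-!
The set `U` is the image of the `K`-linear embedding `α ↦ (σ^i α)_{i<k}`. A proper `L`-subspace
`W` of `L^k` lies in the kernel of a nonzero functional `v ↦ ∑ c_i v_i`, so `U ∩ W` is the image of
the kernel of the `σ`-linearized polynomial `x ↦ ∑_{i<k} c_i σ^i(x)`. That kernel has `K`-dimension
at most `(k - 1) · dim_K L^σ = k - 1`: if `β ≠ 0` lies in it, the operator `x ↦ T(βx)` kills `1`,
hence factors as `h ∘ (σ - 1)` with `h` of smaller degree (partial sums of the coefficients), and
`dim ker (h ∘ (σ - 1)) ≤ dim ker h + dim ker (σ - 1)`. Spanning follows from the same bound: were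
`U` inside a proper subspace, `U ∩ W = U` would have dimension `m > k - 1`.
-/

open Module Finset LinearMap

theorem LinearMap.finrank_comap_le {K V V' : Type*} [DivisionRing K] [AddCommGroup V] [Module K V]
    [AddCommGroup V'] [Module K V'] [FiniteDimensional K V] [FiniteDimensional K V']
    (f : V →ₗ[K] V') (p : Submodule K V') :
    finrank K (p.comap f) ≤ finrank K p + finrank K (ker f) := by
  have := f.lift_rank_comap_le p
  simpa only [← finrank_eq_rank, Cardinal.lift_natCast, ← Nat.cast_add, Nat.cast_le] using this

theorem Finset.eq_zero_of_forall_sum_range_succ_eq_zero {M : Type*} [AddCommGroup M] {e : ℕ → M}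
    {n : ℕ} (h : ∀ j < n, ∑ i ∈ range (j + 1), e i = 0) {i : ℕ} (hi : i < n) : e i = 0 := by
  have h_prev : ∑ x ∈ range i, e x = 0 := by
    cases i with
    | zero => exact sum_range_zero e
    | succ i => exact h i (by omega)
  rw [← sum_range_succ_sub_sum e, h i hi, h_prev, sub_zero]

namespace AlgEquiv

variable {K L : Type*} [Field K] [Field L] [Algebra K L]

/-- The `σ`-linearized polynomial `∑_{i<n} c_i X^{σ^i}`, as a `K`-linear endomorphism of `L`. -/
def linearizedMap (σ : L ≃ₐ[K] L) (c : ℕ → L) (n : ℕ) : L →ₗ[K] L :=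
  ∑ i ∈ range n, c i • (σ ^ i).toLinearMap

variable (σ : L ≃ₐ[K] L)

@[simp]
theorem linearizedMap_apply (c : ℕ → L) (n : ℕ) (x : L) :
    σ.linearizedMap c n x = ∑ i ∈ range n, c i * (σ ^ i) x := by
  simp [linearizedMap]

theorem linearizedMap_apply_mul (c : ℕ → L) (n : ℕ) (β x : L) :
    σ.linearizedMap c n (β * x) = σ.linearizedMap (fun i => c i * (σ ^ i) β) n x := by
  simp only [linearizedMap_apply, map_mul, mul_assoc]

theorem ker_linearizedMap_le_map_mulLeft (c : ℕ → L) (n : ℕ) {β : L} (hβ : β ≠ 0) :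
    ker (σ.linearizedMap c n) ≤
      (ker (σ.linearizedMap (fun i => c i * (σ ^ i) β) n)).map (LinearMap.mulLeft K β) := by
  intro y hy
  refine ⟨β⁻¹ * y, ?_, mul_inv_cancel_left₀ hβ y⟩
  rw [SetLike.mem_coe, mem_ker, ← linearizedMap_apply_mul, mul_inv_cancel_left₀ hβ]
  exact hy

theorem linearizedMap_partialSums_apply_sub (e : ℕ → L) (n : ℕ) (x : L) :
    σ.linearizedMap (fun j => ∑ i ∈ range (j + 1), e i) n (σ x - x) =
      (∑ i ∈ range (n + 1), e i) * (σ ^ n) x - σ.linearizedMap e (n + 1) x := by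
  induction n with
  | zero => simp
  | succ n ih =>
    have hpow : (σ ^ n) (σ x) = (σ ^ (n + 1)) x := by rw [pow_succ, AlgEquiv.mul_apply]
    simp only [linearizedMap_apply] at ih ⊢
    rw [sum_range_succ, ih]
    simp only [sum_range_succ, map_sub, hpow]
    ring

theorem ker_linearizedMap_eq_comap {e : ℕ → L} {n : ℕ} (he : ∑ i ∈ range (n + 1), e i = 0) :
    ker (σ.linearizedMap e (n + 1)) =
      (ker (σ.linearizedMap (fun j => ∑ i ∈ range (j + 1), e i) n)).comap
        (σ.toLinearMap - LinearMap.id) := by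
  ext x
  have := σ.linearizedMap_partialSums_apply_sub e n x
  rw [he, zero_mul, zero_sub] at this
  rw [mem_ker, Submodule.mem_comap, mem_ker, LinearMap.sub_apply, toLinearMap_apply, id_apply,
    this, neg_eq_zero]

theorem finrank_ker_linearizedMap_le [FiniteDimensional K L] {n : ℕ} {c : ℕ → L}
    (hc : ∃ i < n, c i ≠ 0) :
    finrank K (ker (σ.linearizedMap c n)) ≤
      (n - 1) * finrank K (ker (σ.toLinearMap - LinearMap.id)) := by
  induction n generalizing c with
  | zero => simp at hc
  | succ n ih =>
    rcases eq_or_ne (ker (σ.linearizedMap c (n + 1))) ⊥ with hT | hT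
    · rw [hT, finrank_bot]
      exact Nat.zero_le _
    obtain ⟨β, hβT, hβ⟩ := (Submodule.ne_bot_iff _).mp hT
    set e : ℕ → L := fun i => c i * (σ ^ i) β
    have he : ∑ i ∈ range (n + 1), e i = 0 := by rwa [mem_ker, linearizedMap_apply] at hβT
    have hd : ∃ j < n, ∑ i ∈ range (j + 1), e i ≠ 0 := by
      by_contra! hd
      obtain ⟨i, hi, hci⟩ := hc
      refine mul_ne_zero hci ((map_ne_zero_iff _ (σ ^ i).injective).mpr hβ)
        (eq_zero_of_forall_sum_range_succ_eq_zero (e := e) (n := n + 1) (fun j hj => ?_) hi)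
      rcases Nat.lt_succ_iff_lt_or_eq.mp hj with hj | rfl
      exacts [hd j hj, he]
    have hn : 1 ≤ n := by obtain ⟨j, hj, -⟩ := hd; omega
    set f := finrank K (ker (σ.toLinearMap - LinearMap.id))
    calc finrank K (ker (σ.linearizedMap c (n + 1)))
        ≤ finrank K (ker (σ.linearizedMap e (n + 1))) :=
          (Submodule.finrank_mono (σ.ker_linearizedMap_le_map_mulLeft c _ hβ)).trans
            (Submodule.finrank_map_le _ _)
      _ ≤ finrank K (ker (σ.linearizedMap (fun j => ∑ i ∈ range (j + 1), e i) n)) + f := by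
          rw [σ.ker_linearizedMap_eq_comap he]
          exact finrank_comap_le _ _
      _ ≤ (n - 1) * f + f := by gcongr; exact ih hd
      _ = (n + 1 - 1) * f := by
          rw [← Nat.succ_mul, Nat.succ_eq_add_one, Nat.sub_add_cancel hn, Nat.add_sub_cancel]

variable {σ} in
theorem finrank_ker_sub_id_le_one [FiniteDimensional K L] [IsGalois K L]
    (hσ : ∀ g : L ≃ₐ[K] L, g ∈ Subgroup.zpowers σ) :
    finrank K (ker (σ.toLinearMap - LinearMap.id)) ≤ 1 := by
  have hle : ker (σ.toLinearMap - LinearMap.id) ≤ Submodule.span K {(1 : L)} := by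
    intro x hx
    have hσx : σ ∈ MulAction.stabilizer (L ≃ₐ[K] L) x := sub_eq_zero.mp hx
    obtain ⟨a, rfl⟩ := (IsGalois.mem_range_algebraMap_iff_fixed x).mpr
      fun g => Subgroup.zpowers_le.mpr hσx (hσ g)
    exact Submodule.mem_span_singleton.mpr ⟨a, (Algebra.algebraMap_eq_smul_one a).symm⟩
  exact (Submodule.finrank_mono hle).trans (finrank_span_singleton one_ne_zero).le

def orbitMap (k : ℕ) : L →ₗ[K] (Fin k → L) :=
  LinearMap.pi fun i => (σ ^ (i : ℕ)).toLinearMap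

theorem orbitMap_injective {k : ℕ} (hk : 0 < k) : Function.Injective (σ.orbitMap k) :=
  fun a b h => by simpa [orbitMap] using congrFun h ⟨0, hk⟩

theorem exists_linearizedMap_eq_comp_orbitMap {k : ℕ} {f : (Fin k → L) →ₗ[L] L} (hf : f ≠ 0) :
    ∃ c : ℕ → L, (∃ i < k, c i ≠ 0) ∧
      f.restrictScalars K ∘ₗ σ.orbitMap k = σ.linearizedMap c k := by
  classical
  set c : ℕ → L := fun n => f fun j => if (j : ℕ) = n then 1 else 0
  have hc : ∀ i : Fin k, c i = f fun j => if i = j then 1 else 0 := by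
    intro i; simp only [c, Fin.ext_iff, eq_comm]
  refine ⟨c, ?_, ?_⟩
  · by_contra! h
    exact hf (LinearMap.ext fun v => by simp [pi_apply_eq_sum_univ f v, ← hc, h _ (Fin.is_lt _)])
  · ext α
    rw [linearizedMap_apply, ← Fin.sum_univ_eq_sum_range (fun i => c i * (σ ^ i) α)]
    change f (σ.orbitMap k α) = _
    rw [pi_apply_eq_sum_univ f]
    refine sum_congr rfl fun i _ => ?_
    rw [hc, smul_eq_mul, mul_comm]
    rfl

theorem finrank_range_orbitMap_inf_le [FiniteDimensional K L] {k : ℕ}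
    {W : Submodule L (Fin k → L)} (hW : W ≠ ⊤) :
    finrank K ↥(range (σ.orbitMap k) ⊓ W.restrictScalars K) ≤
      (k - 1) * finrank K (ker (σ.toLinearMap - LinearMap.id)) := by
  obtain ⟨f, hf, hWf⟩ := W.exists_le_ker_of_lt_top hW.lt_top
  obtain ⟨c, hc, hfc⟩ := σ.exists_linearizedMap_eq_comp_orbitMap hf
  have hle : range (σ.orbitMap k) ⊓ W.restrictScalars K ≤
      (ker (σ.linearizedMap c k)).map (σ.orbitMap k) := by
    rintro _ ⟨⟨α, rfl⟩, hα⟩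
    refine ⟨α, ?_, rfl⟩
    rw [SetLike.mem_coe, ← hfc, mem_ker]
    exact hWf hα
  calc _ ≤ _ := Submodule.finrank_mono hle
    _ ≤ _ := Submodule.finrank_map_le _ _
    _ ≤ _ := σ.finrank_ker_linearizedMap_le hc

end AlgEquiv

/-- for a cyclic Galois extension `L/K` of degree `m` with Galois
group generated by `σ`, and `k ≤ m`, the set
`U = {(α, σ(α), …, σ^{k−1}(α)) : α ∈ L}` is a `(k−1)`-scattered
`[m,k]_{L/K}` system. -/
theorem scattered_example (K L : Type*) [Field K] [Field L] [Algebra K L]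
    [FiniteDimensional K L] [IsGalois K L] (m : ℕ) (hm : Module.finrank K L = m)
    (σ : L ≃ₐ[K] L) (hσ : ∀ g : L ≃ₐ[K] L, g ∈ Subgroup.zpowers σ)
    (k : ℕ) (hk : 0 < k) (hkm : k ≤ m) :
    ∃ U : Submodule K (Fin k → L),
      (U : Set (Fin k → L)) = {v | ∃ α : L, v = fun i : Fin k => (σ ^ (i : ℕ)) α} ∧
      Module.finrank K U = m ∧
      Submodule.span L (U : Set (Fin k → L)) = ⊤ ∧
      ∀ W : Submodule L (Fin k → L), Module.finrank L W = k - 1 →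
        Module.finrank K ↥(U ⊓ W.restrictScalars K) ≤ k - 1 := by
  set U := range (σ.orbitMap k)
  have hU : finrank K U = m := by rw [finrank_range_of_inj (σ.orbitMap_injective hk), hm]
  have hscat (W : Submodule L (Fin k → L)) (hW : W ≠ ⊤) :
      finrank K ↥(U ⊓ W.restrictScalars K) ≤ k - 1 :=
    (σ.finrank_range_orbitMap_inf_le hW).trans
      ((Nat.mul_le_mul_left _ (AlgEquiv.finrank_ker_sub_id_le_one hσ)).trans_eq (mul_one _))
  refine ⟨U, ?_, hU, ?_, fun W hW => hscat W ?_⟩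
  · ext v
    exact exists_congr fun α => eq_comm
  · by_contra hspan
    have hUW : U ≤ (Submodule.span L (U : Set (Fin k → L))).restrictScalars K :=
      fun _ hx => Submodule.subset_span hx
    have := hscat _ hspan
    rw [inf_eq_left.mpr hUW, hU] at this
    omega
  · rintro rfl
    rw [finrank_top, finrank_fin_fun] at hW
    omega
end

section
/- Let n and k be positive integers with k ≥ 2, and suppose there exists an ℝ-linear subspace C of the space of n×n real matrices with dim_ℝ C = k such that every nonzero matrix in C is invertible. Then there exist k − 1 continuous vector fields φ_1, ..., φ_{k−1} on the unit sphere S^{n−1} ⊆ ℝ^n (continuous maps φ_i : S^{n−1} → ℝ^n with ⟨v, φ_i(v)⟩ = 0 for all v ∈ S^{n−1}) that are linearly independent, i.e., for every v ∈ S^{n−1} the vectors φ_1(v), ..., φ_{k−1}(v) are linearly independent over ℝ. -/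
/-!
Pick a basis `A₀, …, Aₘ` of the space of matrices (as operators on `ℝⁿ`). For `w ≠ 0`, evaluation
at `w` is injective on that space, since every nonzero element is invertible; so the vectors
`A₀ w, …, Aₘ w` are linearly independent. Taking `w = A₀⁻¹ v` for a unit vector `v`, the vectors
`v, A₁A₀⁻¹ v, …, AₘA₀⁻¹ v` are independent, and hence so are the projections of the last `m` of them
onto the tangent space `v^⊥`, which depend continuously on `v`.
-/
open Module Submodule Set Metric
open scoped RealInnerProductSpace

theorem ContinuousLinearMap.injective_of_isUnit {R M : Type*} [Semiring R] [TopologicalSpace M]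
    [AddCommMonoid M] [Module R M] {f : M →L[R] M} (hf : IsUnit f) : Function.Injective f := by
  obtain ⟨u, rfl⟩ := hf
  exact Function.LeftInverse.injective (g := (↑u⁻¹ : M →L[R] M)) fun x => by
    rw [← mul_apply_eq_comp, Units.inv_mul, one_apply_eq_self]

theorem LinearIndependent.apply_of_injective {ι 𝕜 E F : Type*} [NontriviallyNormedField 𝕜]
    [NormedAddCommGroup E] [NormedSpace 𝕜 E] [NormedAddCommGroup F] [NormedSpace 𝕜 F]
    {f : ι → E →L[𝕜] F} (hf : LinearIndependent 𝕜 f)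
    (hinj : ∀ g ∈ span 𝕜 (range f), g ≠ 0 → Function.Injective g) {w : E} (hw : w ≠ 0) :
    LinearIndependent 𝕜 (fun i => f i w) :=
  hf.map (f := (ContinuousLinearMap.apply 𝕜 F w).toLinearMap) <| by
    refine Submodule.disjoint_def.2 fun g hg hgw => ?_
    by_contra hg0
    exact hw (hinj g hg hg0 (by simpa using hgw))

theorem LinearIndependent.sub_smul_of_finCons {K V : Type*} [Field K] [AddCommGroup V]
    [Module K V] {m : ℕ} {x : V} {u : Fin m → V} (h : LinearIndependent K (Fin.cons x u))
    (ℓ : V →ₗ[K] K) : LinearIndependent K (fun i => u i - ℓ (u i) • x) := by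
  obtain ⟨hu, hx⟩ := linearIndependent_finCons.1 h
  refine hu.map (f := LinearMap.id - ℓ.smulRight x) <| Submodule.disjoint_def.2 fun w hw hker => ?_
  have hw_eq : w = ℓ w • x := by simpa [sub_eq_zero] using hker
  by_cases hℓ : ℓ w = 0
  · simpa [hℓ] using hw_eq
  · refine absurd ?_ hx
    rw [← inv_smul_smul₀ hℓ x, ← hw_eq]
    exact Submodule.smul_mem _ _ hw

theorem inner_sub_inner_smul_self_of_norm_eq_one {E : Type*} [NormedAddCommGroup E]
    [InnerProductSpace ℝ E] {v : E} (hv : ‖v‖ = 1) (u : E) : ⟪v, u - ⟪v, u⟫ • v⟫ = 0 := by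
  rw [inner_sub_right, real_inner_smul_right, real_inner_self_eq_norm_sq, hv]
  ring

theorem exists_tangent_fields_of_forall_isUnit {E : Type*} [NormedAddCommGroup E]
    [InnerProductSpace ℝ E] {m : ℕ} (V : Submodule ℝ (E →L[ℝ] E)) (hV : finrank ℝ V = m + 1)
    (hunit : ∀ f ∈ V, f ≠ 0 → IsUnit f) :
    ∃ φ : Fin m → sphere (0 : E) 1 → E, (∀ i, Continuous (φ i)) ∧
      (∀ i (v : sphere (0 : E) 1), ⟪(v : E), φ i v⟫ = 0) ∧
      ∀ v, LinearIndependent ℝ (fun i => φ i v) := by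
  have : Module.Finite ℝ V := finite_of_finrank_eq_succ hV
  let b := finBasisOfFinrankEq ℝ V hV
  let A : Fin (m + 1) → E →L[ℝ] E := fun j => b j
  have hA : LinearIndependent ℝ A := b.linearIndependent.map' V.subtype V.ker_subtype
  have hspan : span ℝ (range A) ≤ V := span_le.2 <| range_subset_iff.2 fun j => (b j).2
  obtain ⟨u, hu⟩ : IsUnit (A 0) := hunit _ (b 0).2 (by simpa [A] using b.ne_zero 0)
  let ψ : Fin m → E →L[ℝ] E := fun i => A i.succ * ↑u⁻¹
  refine ⟨fun i v => ψ i v - ⟪(v : E), ψ i v⟫ • (v : E), fun i => by fun_prop,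
    fun i v => inner_sub_inner_smul_self_of_norm_eq_one (norm_eq_of_mem_sphere v) _, fun v => ?_⟩
  set w := (↑u⁻¹ : E →L[ℝ] E) v
  have hAw : A 0 w = v := by
    rw [← hu, ← mul_apply_eq_comp, Units.mul_inv, one_apply_eq_self]
  have hw : w ≠ 0 := fun h => ne_zero_of_mem_unit_sphere v (by simpa [h] using hAw.symm)
  have hcons : (fun j => A j w) = Fin.cons (v : E) fun i => ψ i v := by
    rw [← Fin.cons_self_tail (fun j => A j w), hAw]
    rfl
  have hindep : LinearIndependent ℝ (Fin.cons (v : E) fun i => ψ i v) := hcons ▸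
    hA.apply_of_injective
      (fun g hg hg0 => ContinuousLinearMap.injective_of_isUnit (hunit g (hspan hg) hg0)) hw
  exact hindep.sub_smul_of_finCons (innerSL ℝ (v : E)).toLinearMap

theorem vector_fields_from_code_general (n k : ℕ) (hk : 2 ≤ k)
    (C : Submodule ℝ (Matrix (Fin n) (Fin n) ℝ))
    (hdim : Module.finrank ℝ C = k)
    (hC : ∀ A ∈ C, A ≠ 0 → IsUnit A) :
    ∃ φ : Fin (k - 1) →
        (Metric.sphere (0 : EuclideanSpace ℝ (Fin n)) 1) → EuclideanSpace ℝ (Fin n),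
      (∀ i, Continuous (φ i)) ∧
      (∀ i, ∀ v : Metric.sphere (0 : EuclideanSpace ℝ (Fin n)) 1,
        (inner ℝ (v : EuclideanSpace ℝ (Fin n)) (φ i v) : ℝ) = 0) ∧
      (∀ v : Metric.sphere (0 : EuclideanSpace ℝ (Fin n)) 1,
        LinearIndependent ℝ (fun i => φ i v)) := by
  obtain ⟨m, rfl⟩ : ∃ m, k = m + 1 := ⟨k - 1, by omega⟩
  let e := Matrix.toEuclideanCLM (n := Fin n) (𝕜 := ℝ)
  rw [Nat.add_sub_cancel]
  refine exists_tangent_fields_of_forall_isUnit (C.map e.toAlgEquiv.toLinearMap)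
    (by rw [LinearEquiv.finrank_map_eq, hdim]) ?_
  rintro _ ⟨M, hM, rfl⟩ hM0
  exact (hC M hM (by rintro rfl; simp at hM0)).map e

/-- a `k`-dimensional space of invertible `n×n` real matrices
(`k ≥ 2`) yields `k−1` everywhere linearly independent continuous tangent
vector fields on the unit sphere `S^{n−1} ⊆ ℝ^n`. -/
theorem vector_fields_from_code (n k : ℕ) (hn : 0 < n) (hk : 2 ≤ k)
    (C : Submodule ℝ (Matrix (Fin n) (Fin n) ℝ))
    (hdim : Module.finrank ℝ C = k)
    (hC : ∀ A ∈ C, A ≠ 0 → IsUnit A) :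
    ∃ φ : Fin (k - 1) →
        (Metric.sphere (0 : EuclideanSpace ℝ (Fin n)) 1) → EuclideanSpace ℝ (Fin n),
      (∀ i, Continuous (φ i)) ∧
      (∀ i, ∀ v : Metric.sphere (0 : EuclideanSpace ℝ (Fin n)) 1,
        (inner ℝ (v : EuclideanSpace ℝ (Fin n)) (φ i v) : ℝ) = 0) ∧
      (∀ v : Metric.sphere (0 : EuclideanSpace ℝ (Fin n)) 1,
        LinearIndependent ℝ (fun i => φ i v)) :=
  vector_fields_from_code_general n k hk C hdim hC
end
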